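/- arXiv:2211.13447 — 3 statements merged into one kernel-verified Lean document; each statement's English description precedes it below -/
import Mathlib

section
/- If w is the causal treewidth of a base network G (all of whose internal variables are functional) and w^t is the causal treewidth of its twin network G^t, then w^t ≤ 2w + 1. -/
namespace Counterfactual

attribute [local instance] Classical.propDecidable

noncomputable section

universe u v

variable {V : Type u}

variable {V : Type u}

/-- The directed graph given by edge relation `E` (`E p c` means `p` is a parent of `c`)
is acyclic, i.e. it is a DAG. -/
def IsAcyclicRel (E : V → V → Prop) : Prop := ∀ x, ¬ Relation.TransGen E x x

/-- `x` is a root of the DAG `E`: it has no parents.  Non-roots are called internal. -/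
def isRoot (E : V → V → Prop) (x : V) : Prop := ∀ p, ¬ E p x

/-- The family of variable `X` in the DAG `E`: `X` together with its parents. -/
def famOf (E : V → V → Prop) (X : V) : Set V := insert X {p | E p X}

/-- The moral graph of the DAG `E`: connect every pair of nodes having a common child,
then drop directions. -/
def moralGraph (E : V → V → Prop) : SimpleGraph V where
  Adj u w := u ≠ w ∧ (E u w ∨ E w u ∨ ∃ c, E u c ∧ E w c)
  symm := by
    constructor
    intro u w h
    obtain ⟨h1, h2⟩ := h
    refine ⟨Ne.symm h1, ?_⟩
    rcases h2 with h | h | ⟨c, hc1, hc2⟩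
    · exact Or.inr (Or.inl h)
    · exact Or.inl h
    · exact Or.inr (Or.inr ⟨c, hc2, hc1⟩)
  loopless := by
    constructor
    intro u h
    exact h.1 rfl

/-- Eliminating vertex `x` from an undirected graph: pairwise connect the neighbors
of `x`, then remove (isolate) `x`. -/
def eliminate (G : SimpleGraph V) (x : V) : SimpleGraph V where
  Adj u w := u ≠ w ∧ u ≠ x ∧ w ≠ x ∧ (G.Adj u w ∨ (G.Adj u x ∧ G.Adj x w))
  symm := by
    constructor
    intro u w h
    obtain ⟨h1, h2, h3, h4⟩ := h
    refine ⟨Ne.symm h1, h3, h2, ?_⟩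
    rcases h4 with h | ⟨ha, hb⟩
    · exact Or.inl h.symm
    · exact Or.inr ⟨hb.symm, ha.symm⟩
  loopless := by
    constructor
    intro u h
    exact h.1 rfl

/-- Eliminate a list of vertices, in order. -/
def elimList (G : SimpleGraph V) : List V → SimpleGraph V
  | [] => G
  | x :: xs => elimList (eliminate G x) xs

/-- The graph obtained from `G` after eliminating the first `i` variables of `π`. -/
def graphAt (G : SimpleGraph V) (π : List V) (i : ℕ) : SimpleGraph V :=
  elimList G (π.take i)

/-- `x` together with its neighbors in the undirected graph `G`. -/
def closedNbhd (G : SimpleGraph V) (x : V) : Set V := insert x {y | G.Adj x y}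

/-- An elimination order: a total ordering of all the variables. -/
def IsElimOrder (π : List V) : Prop := π.Nodup ∧ ∀ x : V, x ∈ π

/-- The cluster of variable `X` in the elimination process on the moral graph of `E`
induced by `π`: `X` together with its neighbors in the graph just before `X` is eliminated. -/
def clusterOf (E : V → V → Prop) (π : List V) (X : V) : Set V :=
  closedNbhd (graphAt (moralGraph E) π (π.idxOf X)) X

/-- The width of an elimination order: the size of its largest cluster minus one. -/
def orderWidth (E : V → V → Prop) (π : List V) : ℕ :=
  sSup {n : ℕ | ∃ X ∈ π, n = (clusterOf E π X).ncard} - 1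

/-- The treewidth of the DAG `E`: the minimum width attained by an elimination order. -/
def treewidthOf (E : V → V → Prop) : ℕ :=
  sInf {w : ℕ | ∃ π : List V, IsElimOrder π ∧ orderWidth E π = w}

/-! ### Twin networks -/

/-- The variables of the twin network of `E`: the base variables (`Sum.inl`) together
with a duplicate (`Sum.inr`) for every internal (non-root) variable. -/
abbrev TwinVar (E : V → V → Prop) : Type u := V ⊕ {x : V // ¬ isRoot E x}

/-- The duplicate `X'` of a variable `X`; by convention `X' = X` when `X` is a root. -/
def twinDup (E : V → V → Prop) (x : V) : TwinVar E :=
  if h : isRoot E x then Sum.inl x else Sum.inr ⟨x, h⟩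

/-- The edges of the twin network `G^t` of the base network `E`. -/
def twinEdge (E : V → V → Prop) (a b : TwinVar E) : Prop :=
  match a, b with
  | Sum.inl p, Sum.inl x => E p x
  | Sum.inl p, Sum.inr x => isRoot E p ∧ E p x.1
  | Sum.inr p, Sum.inr x => E p.1 x.1
  | Sum.inr _, Sum.inl _ => False

/-- The twin elimination order: replace each non-root variable `X` of `π`
by the two consecutive variables `X, X'`. -/
def twinOrder (E : V → V → Prop) (π : List V) : List (TwinVar E) :=
  π.foldr (fun x acc =>
    (if h : isRoot E x then [Sum.inl x] else [Sum.inl x, Sum.inr ⟨x, h⟩]) ++ acc) []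

/-- Eliminate the pair `{X, X'}` (a single variable when `X` is a root) from a graph
on the twin variables. -/
def elimTwinPair (E : V → V → Prop) (G : SimpleGraph (TwinVar E)) (x : V) :
    SimpleGraph (TwinVar E) :=
  if h : isRoot E x then eliminate G (Sum.inl x)
  else eliminate (eliminate G (Sum.inl x)) (Sum.inr ⟨x, h⟩)

/-- The twin graph sequence: `twinGraphAt E π i` is the graph obtained from the moral graph
of the twin network after eliminating the pairs `{π 0, (π 0)'}, …` for the first `i`
variables of `π`. -/
def twinGraphAt (E : V → V → Prop) (π : List V) (i : ℕ) : SimpleGraph (TwinVar E) :=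
  (π.take i).foldl (elimTwinPair E) (moralGraph (twinEdge E))

/-- The cluster of twin variable `Y` in the elimination process on the moral graph of the
twin network induced by the twin elimination order. -/
def twinClusterOf (E : V → V → Prop) (π : List V) (Y : TwinVar E) : Set (TwinVar E) :=
  clusterOf (twinEdge E) (twinOrder E π) Y

/-! ### Jointrees -/

/-- A leaf of a tree: a node with exactly one neighbor. -/
def IsLeaf {J : Type v} (T : SimpleGraph J) (j : J) : Prop := ∃! k, T.Adj j k

/-- A jointree for the DAG `E`: a tree `T` together with a host function `H` mapping
(the index `X` of) each family of `E` to a nonempty set of hosting nodes; only leaves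
may be hosts and each leaf hosts exactly one family. -/
structure Jointree (E : V → V → Prop) (J : Type v) where
  T : SimpleGraph J
  isTree : T.IsTree
  H : V → Set J
  hosts_nonempty : ∀ X : V, (H X).Nonempty
  hosts_leaf : ∀ (X : V) (j : J), j ∈ H X → IsLeaf T j
  leaf_host : ∀ j : J, IsLeaf T j → ∃! X : V, j ∈ H X

variable {E : V → V → Prop} {J : Type v}

/-- The variables appearing (in a family hosted by a leaf) on the `i`-side of the
tree edge `(i, j)`. -/
def sideVars (jt : Jointree E J) (i j : J) : Set V :=
  {X | ∃ (Y : V) (l : J), l ∈ jt.H Y ∧ X ∈ famOf E Y ∧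
    (jt.T.deleteEdges {s(i, j)}).Reachable i l}

/-- The separator of the tree edge `(i, j)`: the variables hosted on both sides. -/
def sepOf (jt : Jointree E J) (i j : J) : Set V :=
  sideVars jt i j ∩ sideVars jt j i

/-- The cluster of a jointree node: for a leaf, the family it hosts; for an internal
node, the union of the separators of its adjacent edges. -/
def clusterJT (jt : Jointree E J) (i : J) : Set V :=
  if IsLeaf jt.T i then ⋃ X ∈ {Y : V | i ∈ jt.H Y}, famOf E X
  else ⋃ j ∈ {j : J | jt.T.Adj i j}, sepOf jt i j

/-- The width of a jointree: the size of its largest cluster minus one. -/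
def widthJT (jt : Jointree E J) : ℕ := (⨆ i : J, (clusterJT jt i).ncard) - 1

/-- `l` is at or below `u` in the tree `T` rooted at `r`: `u` lies on every
(equivalently, on the unique) path from `r` to `l`. -/
def Below {J : Type v} (T : SimpleGraph J) (r u l : J) : Prop :=
  ∀ p : T.Walk r l, p.IsPath → u ∈ p.support

/-- Node `u` of the jointree is duplicated by Algorithm 1 (with root `r`): every leaf at
or below `u` hosts only families of internal variables. -/
def Duplicated (jt : Jointree E J) (r u : J) : Prop :=
  ∀ l : J, IsLeaf jt.T l → Below jt.T r u l → ∀ X : V, l ∈ jt.H X → ¬ isRoot E X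

/-- The nodes of the twin jointree produced by Algorithm 1: the original nodes
(`Sum.inl`) plus a duplicate (`Sum.inr`) of every duplicated node. -/
abbrev TwinJ (jt : Jointree E J) (r : J) := J ⊕ {u : J // Duplicated jt r u}

/-- Adjacency of the twin jointree produced by Algorithm 1: the original tree edges,
the duplicates of the duplicated edges, and the edges attaching the roots of the
duplicate subtrees to the parents of the corresponding duplicated subtree roots. -/
def twinTAdj (jt : Jointree E J) (r : J) : TwinJ jt r → TwinJ jt r → Prop
  | Sum.inl i, Sum.inl j => jt.T.Adj i j
  | Sum.inl i, Sum.inr v => jt.T.Adj i v.1 ∧ ¬ Duplicated jt r i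
  | Sum.inr u, Sum.inl j => jt.T.Adj u.1 j ∧ ¬ Duplicated jt r j
  | Sum.inr u, Sum.inr v => jt.T.Adj u.1 v.1

/-- The tree of the twin jointree produced by Algorithm 1. -/
def twinT (jt : Jointree E J) (r : J) : SimpleGraph (TwinJ jt r) where
  Adj := twinTAdj jt r
  symm := by
    constructor
    rintro (i | u) (j | v) h <;> simp only [twinTAdj] at h ⊢
    · exact jt.T.symm.symm _ _ h
    · exact ⟨jt.T.symm.symm _ _ h.1, h.2⟩
    · exact ⟨jt.T.symm.symm _ _ h.1, h.2⟩
    · exact jt.T.symm.symm _ _ h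
  loopless := by
    constructor
    rintro (i | u) h <;> simp only [twinTAdj] at h
    · exact jt.T.loopless.irrefl i h
    · exact jt.T.loopless.irrefl u.1 h

/-- The host function of the twin jointree produced by Algorithm 1: a base family is
hosted by the original hosts of the corresponding base family, and a duplicate family is
hosted by the duplicates of the hosts of the corresponding base family. -/
def twinH (jt : Jointree E J) (r : J) : TwinVar E → Set (TwinJ jt r) :=
  fun a =>
    match a with
    | Sum.inl X => Sum.inl '' jt.H X
    | Sum.inr x => {b | ∃ (l : J) (hl : Duplicated jt r l),
        l ∈ jt.H x.1 ∧ b = Sum.inr ⟨l, hl⟩}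

/-- The copy of jointree node `i` on the duplicate side: its duplicate if `i` is
duplicated, and `i` itself otherwise. -/
def dupJ (jt : Jointree E J) (r i : J) : TwinJ jt r :=
  if h : Duplicated jt r i then Sum.inr ⟨i, h⟩ else Sum.inl i

/-! ### Thinning -/

/-- Thinning rule 1 for removing the functional variable `X` from the separator of
edge `(i,j)`: the edge lies on a path between two leaves hosting the family of `X`,
and every separator on this path contains `X`. -/
def Rule1 (jt : Jointree E J) (S : J → J → Set V) (i j : J) (X : V) : Prop :=
  ∃ (l m : J) (p : jt.T.Walk l m), p.IsPath ∧ l ∈ jt.H X ∧ m ∈ jt.H X ∧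
    s(i, j) ∈ p.edges ∧ ∀ a b : J, s(a, b) ∈ p.edges → X ∈ S a b

/-- Thinning rule 2 for removing the variable `X` from the separator of edge `(i,j)`:
no other separator adjacent to `i` contains `X`, or no other separator adjacent to `j`
contains `X`. -/
def Rule2 (jt : Jointree E J) (S : J → J → Set V) (i j : J) (X : V) : Prop :=
  (∀ k : J, jt.T.Adj i k → k ≠ j → X ∉ S i k) ∨
  (∀ k : J, jt.T.Adj j k → k ≠ i → X ∉ S j k)

/-- One valid thinning step on a separator assignment: remove a functional
(here: internal, as in an SCM) variable `X` from the separator of an edge `(i,j)`,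
as licensed by one of the two thinning rules. -/
def ThinStep (jt : Jointree E J) (S S' : J → J → Set V) : Prop :=
  ∃ (i j : J) (X : V), jt.T.Adj i j ∧ ¬ isRoot E X ∧ X ∈ S i j ∧
    (Rule1 jt S i j X ∨ Rule2 jt S i j X) ∧
    S' = fun a b => if (a = i ∧ b = j) ∨ (a = j ∧ b = i) then S a b \ {X} else S a b

/-- `S` is the separator assignment of a thinned jointree obtained from `jt`:
it is reachable from the separators of `jt` by valid thinning steps, applied
to exhaustion. -/
def IsThinning (jt : Jointree E J) (S : J → J → Set V) : Prop :=
  Relation.ReflTransGen (ThinStep jt) (fun i j => sepOf jt i j) S ∧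
    ∀ S', ¬ ThinStep jt S S'

/-- The cluster of a node of a thinned jointree with separator assignment `S`. -/
def thClusterJT (jt : Jointree E J) (S : J → J → Set V) (i : J) : Set V :=
  if IsLeaf jt.T i then ⋃ X ∈ {Y : V | i ∈ jt.H Y}, famOf E X
  else ⋃ j ∈ {j : J | jt.T.Adj i j}, S i j

/-- The width of a thinned jointree with separator assignment `S`. -/
def thWidthJT (jt : Jointree E J) (S : J → J → Set V) : ℕ :=
  (⨆ i : J, (thClusterJT jt S i).ncard) - 1

/-- The causal treewidth of the DAG `E` whose internal variables are all functional:
the minimum width attained by a thinned jointree for `E`. -/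
def causalTreewidth (E : V → V → Prop) : ℕ :=
  sInf {w : ℕ | ∃ (J : Type u) (_ : Finite J) (jt : Jointree E J) (S : J → J → Set V),
    IsThinning jt S ∧ thWidthJT jt S = w}

/-- The thinned separator assignment for the twin jointree produced by Algorithm 1,
obtained from a thinned separator assignment `S` of the base jointree:
`S^t = S` on duplicated edges, `S^t = S'` on duplicate edges, and
`S^t = S ∪ S'` on invariant edges. -/
def twinSep (jt : Jointree E J) (r : J) (S : J → J → Set V) :
    TwinJ jt r → TwinJ jt r → Set (TwinVar E)
  | Sum.inl i, Sum.inl j =>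
      if Duplicated jt r i ∨ Duplicated jt r j then Sum.inl '' S i j
      else Sum.inl '' S i j ∪ twinDup E '' S i j
  | Sum.inl i, Sum.inr v => twinDup E '' S i v.1
  | Sum.inr u, Sum.inl j => twinDup E '' S u.1 j
  | Sum.inr u, Sum.inr v => twinDup E '' S u.1 v.1

/-! ### N-world networks -/

/-- The variables of the `N`-world network of a base network with variables `V`,
with respect to a set `R` of roots: the variables in `R` (`Sum.inl`) stay unreplicated,
and each variable outside `R` is replaced by `N` duplicates (`Sum.inr`). -/
abbrev NVar (R : Set V) (N : ℕ) : Type u := {x : V // x ∈ R} ⊕ ({x : V // x ∉ R} × Fin N)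

/-- The `k`-th duplicate `X^k` of variable `X`; by convention `X^k = X` when `X ∈ R`. -/
def ndup (R : Set V) (N : ℕ) (x : V) (k : Fin N) : NVar R N :=
  if h : x ∈ R then Sum.inl ⟨x, h⟩ else Sum.inr (⟨x, h⟩, k)

/-- The edges of the `N`-world network `G^N` of the base network `E` with respect to the
set of roots `R`: a parent `P ∈ R` of `X` is a parent of every duplicate `X^k`, while a
parent `P ∉ R` of `X` yields the edges `P^k → X^k`. -/
def nEdge (E : V → V → Prop) (R : Set V) (N : ℕ) (a b : NVar R N) : Prop :=
  match a, b with
  | Sum.inl p, Sum.inr x => E p.1 x.1.1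
  | Sum.inr p, Sum.inr x => E p.1.1 x.1.1 ∧ p.2 = x.2
  | _, _ => False

/-- Eliminate all `N` duplicates `x^1, …, x^N` of `x` (a single variable when `x ∈ R`). -/
def elimNBlock (R : Set V) (N : ℕ) (G : SimpleGraph (NVar R N)) (x : V) :
    SimpleGraph (NVar R N) :=
  if h : x ∈ R then eliminate G (Sum.inl ⟨x, h⟩)
  else (List.ofFn (fun k : Fin N => (Sum.inr (⟨x, h⟩, k) : NVar R N))).foldl eliminate G

/-- The `N`-world elimination order obtained from `π`: replace each variable `x ∉ R`
by its `N` duplicates `x^1, …, x^N`. -/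
def nOrder (R : Set V) (N : ℕ) (π : List V) : List (NVar R N) :=
  π.foldr (fun x acc =>
    (if h : x ∈ R then [(Sum.inl ⟨x, h⟩ : NVar R N)]
     else List.ofFn (fun k : Fin N => (Sum.inr (⟨x, h⟩, k) : NVar R N))) ++ acc) []

/-! ### Generalized N-world networks -/

/-- The variables of a generalized `N`-world network: nodes outside the duplicated set `D`
stay unreplicated, and each node in `D` is replaced by `N` duplicates. -/
abbrev GNVar (D : Set V) (N : ℕ) : Type u := {x : V // x ∉ D} ⊕ ({x : V // x ∈ D} × Fin N)

/-- The edges of a generalized `N`-world network of the base network `E` with respect to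
the duplicated set `D` and the optional extra edges `ex` between duplicates (an edge from
`X^i` to `X^j` is added when `i < j` and `ex X i j` holds). -/
def gnEdge (E : V → V → Prop) (D : Set V) (N : ℕ) (ex : V → Fin N → Fin N → Prop)
    (a b : GNVar D N) : Prop :=
  match a, b with
  | Sum.inl p, Sum.inl x => E p.1 x.1
  | Sum.inl p, Sum.inr x => E p.1 x.1.1
  | Sum.inr p, Sum.inr x =>
      (E p.1.1 x.1.1 ∧ p.2 = x.2) ∨ (p.1.1 = x.1.1 ∧ p.2 < x.2 ∧ ex x.1.1 p.2 x.2)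
  | Sum.inr _, Sum.inl _ => False


/-- The `N`-world graph sequence: the graph obtained from the moral graph of the
`N`-world network after eliminating all duplicates of the first `i` variables of `π`. -/
def nGraphAt (E : V → V → Prop) (R : Set V) (N : ℕ) (π : List V) (i : ℕ) :
    SimpleGraph (NVar R N) :=
  (π.take i).foldl (elimNBlock R N) (moralGraph (nEdge E R N))

/-- The cluster of an `N`-world variable `Y` in the elimination process on the moral
graph of the `N`-world network induced by the `N`-world elimination order. -/
def nClusterOf (E : V → V → Prop) (R : Set V) (N : ℕ) (π : List V) (Y : NVar R N) :
    Set (NVar R N) :=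
  clusterOf (nEdge E R N) (nOrder R N π) Y

end


/-! ### Auxiliary machinery for the proof of Statement 9 -/

noncomputable section AuxProof

open SimpleGraph

variable {V : Type*} {J : Type*}

/-- In a graph where `j` is the only neighbor of `l`, deleting the edge `l-j`
isolates `l`. -/
lemma pendant_reachable' {G : SimpleGraph J} {l j : J}
    (h : ∀ b, G.Adj l b → b = j) :
    ∀ v : J, (G.deleteEdges {s(l, j)}).Reachable l v → v = l := by
  intro v hr
  obtain ⟨p⟩ := hr
  cases p with
  | nil => rfl
  | cons hadj q =>
    rw [SimpleGraph.deleteEdges_adj] at hadj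
    exact absurd (by rw [h _ hadj.1]; exact Set.mem_singleton _) hadj.2

lemma tree_bridge {T : SimpleGraph J} (hac : T.IsAcyclic) {a b : J} (hab : T.Adj a b) :
    ¬ (T.deleteEdges {s(a, b)}).Reachable a b :=
  (SimpleGraph.isBridge_iff.mp
    (SimpleGraph.isAcyclic_iff_forall_adj_isBridge.mp hac hab))

/-- In an acyclic graph, the component of `k` after deleting the edge `k-i` is
strictly inside the component of `i` after deleting another edge `i-j` at `i`. -/
lemma comp_subset {T : SimpleGraph J} (hac : T.IsAcyclic)
    {i j k : J} (hij : T.Adj i j) (hik : T.Adj i k) (hkj : k ≠ j) :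
    {v | (T.deleteEdges {s(k, i)}).Reachable k v} ⊆
      {v | (T.deleteEdges {s(i, j)}).Reachable i v} \ {i} := by
  have hbr := tree_bridge hac hik.symm
  have hik' : (T.deleteEdges {s(i, j)}).Adj i k := by
    rw [SimpleGraph.deleteEdges_adj]
    refine ⟨hik, fun hmem => ?_⟩
    rcases Sym2.eq_iff.mp (Set.mem_singleton_iff.mp hmem) with ⟨_, h2⟩ | ⟨h1, _⟩
    · exact hkj h2
    · exact hij.ne h1
  have main : ∀ (v a : J), (T.deleteEdges {s(k, i)}).Walk a v →
      (T.deleteEdges {s(k, i)}).Reachable k a →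
      (T.deleteEdges {s(i, j)}).Reachable i a → a ≠ i →
      (T.deleteEdges {s(i, j)}).Reachable i v ∧ v ≠ i := by
    intro v a p
    induction p with
    | nil => exact fun _ h2 h3 => ⟨h2, h3⟩
    | @cons a b _ hadj q ih =>
      intro hka hia hai
      have hb_ne : b ≠ i := by
        intro hbi
        apply hbr
        have := hka.trans hadj.reachable
        rwa [hbi] at this
      have hadj' : (T.deleteEdges {s(i, j)}).Adj a b := by
        rw [SimpleGraph.deleteEdges_adj] at hadj ⊢
        refine ⟨hadj.1, fun hmem => ?_⟩
        rcases Sym2.eq_iff.mp (Set.mem_singleton_iff.mp hmem) with ⟨h1, _⟩ | ⟨_, h2⟩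
        · exact hai h1
        · exact hb_ne h2
      exact ih (hka.trans hadj.reachable) (hia.trans hadj'.reachable) hb_ne
  intro v hv
  obtain ⟨p⟩ := hv
  have hres := main v k p (SimpleGraph.Reachable.refl k) hik'.reachable hik.ne'
  exact ⟨hres.1, fun h => hres.2 h⟩

lemma sepOf_symm {E : V → V → Prop} (jt : Jointree E J) (a b : J) :
    sepOf jt a b = sepOf jt b a := Set.inter_comm _ _

/-- A symmetric separator assignment. -/
def SymFun (S : J → J → Set V) : Prop := ∀ a b, S a b = S b a

lemma thinStep_subset {E : V → V → Prop} {jt : Jointree E J} {S S' : J → J → Set V}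
    (h : ThinStep jt S S') : ∀ a b, S' a b ⊆ S a b := by
  obtain ⟨i, j, X, _, _, _, _, hS'⟩ := h
  subst hS'
  intro a b
  dsimp only
  split
  · exact Set.diff_subset
  · exact subset_rfl

lemma rtg_subset {E : V → V → Prop} {jt : Jointree E J} {S₀ S : J → J → Set V}
    (h : Relation.ReflTransGen (ThinStep jt) S₀ S) : ∀ a b, S a b ⊆ S₀ a b := by
  induction h with
  | refl => exact fun a b => subset_rfl
  | tail _ hstep ih => exact fun a b => (thinStep_subset hstep a b).trans (ih a b)

lemma thinStep_symm {E : V → V → Prop} {jt : Jointree E J} {S S' : J → J → Set V}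
    (h : ThinStep jt S S') (hs : SymFun S) : SymFun S' := by
  obtain ⟨i, j, X, _, _, _, _, hS'⟩ := h
  subst hS'
  intro a b
  dsimp only
  by_cases hc : (a = i ∧ b = j) ∨ (a = j ∧ b = i)
  · rw [if_pos hc, if_pos (by tauto), hs a b]
  · rw [if_neg hc, if_neg (by tauto), hs a b]

/-- Rule 2 lets us remove a fixed functional variable from all separators. -/
lemma remove_var {E : V → V → Prop} [Finite J] (jt : Jointree E J)
    (X : V) (hX : ¬ isRoot E X) :
    ∀ (n : ℕ) (S : J → J → Set V), SymFun S →
      ({p : J × J | jt.T.Adj p.1 p.2 ∧ X ∈ S p.1 p.2}).ncard ≤ n →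
      ∃ S', Relation.ReflTransGen (ThinStep jt) S S' ∧ (∀ a b, S' a b ⊆ S a b) ∧
        SymFun S' ∧ ∀ i j, jt.T.Adj i j → X ∉ S' i j := by
  intro n
  induction n with
  | zero =>
    intro S hsym hcard
    refine ⟨S, Relation.ReflTransGen.refl, fun _ _ => subset_rfl, hsym, fun i j hij hmem => ?_⟩
    have hin : ((i, j) : J × J) ∈ {p : J × J | jt.T.Adj p.1 p.2 ∧ X ∈ S p.1 p.2} := ⟨hij, hmem⟩
    have hpos := (Set.ncard_pos (Set.toFinite _)).mpr ⟨_, hin⟩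
    omega
  | succ n ih =>
    intro S hsym hcard
    by_cases hempty : {p : J × J | jt.T.Adj p.1 p.2 ∧ X ∈ S p.1 p.2} = ∅
    · refine ⟨S, Relation.ReflTransGen.refl, fun _ _ => subset_rfl, hsym, fun i j hij hmem => ?_⟩
      exact absurd (show ((i, j) : J × J) ∈ {p : J × J | jt.T.Adj p.1 p.2 ∧ X ∈ S p.1 p.2}
        from ⟨hij, hmem⟩) (by simp [hempty])
    · obtain ⟨⟨i, j⟩, hmin_mem, hmin⟩ := Set.exists_min_image
        {p : J × J | jt.T.Adj p.1 p.2 ∧ X ∈ S p.1 p.2}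
        (fun p : J × J => ({v | (jt.T.deleteEdges {s(p.1, p.2)}).Reachable p.1 v}).ncard)
        (Set.toFinite _) (Set.nonempty_iff_ne_empty.mpr hempty)
      obtain ⟨hij, hXij⟩ := hmin_mem
      have hrule : ∀ k, jt.T.Adj i k → k ≠ j → X ∉ S i k := by
        intro k hik hkj hXik
        have hmemki : ((k, i) : J × J) ∈ {p : J × J | jt.T.Adj p.1 p.2 ∧ X ∈ S p.1 p.2} :=
          ⟨hik.symm, by rw [hsym k i]; exact hXik⟩
        have hle := hmin (k, i) hmemki
        have hsub := comp_subset jt.isTree.IsAcyclic hij hik hkj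
        have himem : i ∈ {v | (jt.T.deleteEdges {s(i, j)}).Reachable i v} :=
          SimpleGraph.Reachable.refl i
        have hlt : ({v | (jt.T.deleteEdges {s(k, i)}).Reachable k v}).ncard <
            ({v | (jt.T.deleteEdges {s(i, j)}).Reachable i v}).ncard := by
          calc ({v | (jt.T.deleteEdges {s(k, i)}).Reachable k v}).ncard
              ≤ (({v | (jt.T.deleteEdges {s(i, j)}).Reachable i v}) \ {i}).ncard :=
                Set.ncard_le_ncard hsub (Set.toFinite _)
            _ < _ := Set.ncard_lt_ncard
                ⟨Set.diff_subset, fun hss => (hss himem).2 rfl⟩ (Set.toFinite _)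
        simp only at hle hlt
        omega
      set S' : J → J → Set V := fun a b =>
        if (a = i ∧ b = j) ∨ (a = j ∧ b = i) then S a b \ {X} else S a b with hS'
      have hstep : ThinStep jt S S' := ⟨i, j, X, hij, hX, hXij, Or.inr (Or.inl hrule), hS'⟩
      have hsub' : {p : J × J | jt.T.Adj p.1 p.2 ∧ X ∈ S' p.1 p.2} ⊆
          {p : J × J | jt.T.Adj p.1 p.2 ∧ X ∈ S p.1 p.2} \ {(i, j)} := by
        rintro ⟨a, b⟩ ⟨hab, hXab⟩
        have hXS : X ∈ S a b := thinStep_subset hstep a b hXab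
        refine ⟨⟨hab, hXS⟩, fun hmem => ?_⟩
        obtain ⟨rfl, rfl⟩ : a = i ∧ b = j := by simpa [Prod.ext_iff] using hmem
        rw [hS'] at hXab
        dsimp only at hXab
        rw [if_pos (Or.inl ⟨rfl, rfl⟩)] at hXab
        exact hXab.2 rfl
      have hcard' : ({p : J × J | jt.T.Adj p.1 p.2 ∧ X ∈ S' p.1 p.2}).ncard ≤ n := by
        have h1 := Set.ncard_le_ncard hsub' (Set.toFinite _)
        have h2 : ({p : J × J | jt.T.Adj p.1 p.2 ∧ X ∈ S p.1 p.2} \ {(i, j)}).ncard <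
            ({p : J × J | jt.T.Adj p.1 p.2 ∧ X ∈ S p.1 p.2}).ncard :=
          Set.ncard_lt_ncard
            ⟨Set.diff_subset, fun hss => (hss ⟨hij, hXij⟩).2 rfl⟩ (Set.toFinite _)
        omega
      obtain ⟨S'', hrtg, hsub'', hsym'', habs⟩ := ih S' (thinStep_symm hstep hsym) hcard'
      exact ⟨S'', Relation.ReflTransGen.head hstep hrtg,
        fun a b => (hsub'' a b).trans (thinStep_subset hstep a b), hsym'', habs⟩

lemma remove_list {E : V → V → Prop} [Finite J] (jt : Jointree E J) :
    ∀ (L : List V) (S : J → J → Set V), SymFun S →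
      ∃ S', Relation.ReflTransGen (ThinStep jt) S S' ∧ (∀ a b, S' a b ⊆ S a b) ∧ SymFun S' ∧
        ∀ X ∈ L, ¬ isRoot E X → ∀ i j, jt.T.Adj i j → X ∉ S' i j := by
  intro L
  induction L with
  | nil => exact fun S hs => ⟨S, Relation.ReflTransGen.refl, fun _ _ => subset_rfl, hs, by simp⟩
  | cons X L ih =>
    intro S hs
    by_cases hX : isRoot E X
    · obtain ⟨S', h1, h2, h3, h4⟩ := ih S hs
      refine ⟨S', h1, h2, h3, ?_⟩
      intro Y hY hYr
      rcases List.mem_cons.mp hY with rfl | hY'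
      · exact absurd hX hYr
      · exact h4 Y hY' hYr
    · obtain ⟨S₁, h1, h2, h3, h4⟩ := remove_var jt X hX _ S hs le_rfl
      obtain ⟨S₂, g1, g2, g3, g4⟩ := ih S₁ h3
      refine ⟨S₂, h1.trans g1, fun a b => (g2 a b).trans (h2 a b), g3, ?_⟩
      intro Y hY hYr i j hij
      rcases List.mem_cons.mp hY with rfl | hY'
      · exact fun hm => h4 i j hij (g2 i j hm)
      · exact g4 Y hY' hYr i j hij

lemma remove_all {E : V → V → Prop} [Finite J] [Finite V] (jt : Jointree E J) :
    ∃ S', Relation.ReflTransGen (ThinStep jt) (fun a b => sepOf jt a b) S' ∧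
      (∀ a b, S' a b ⊆ sepOf jt a b) ∧
      ∀ X, ¬ isRoot E X → ∀ i j, jt.T.Adj i j → X ∉ S' i j := by
  haveI : Fintype V := Fintype.ofFinite V
  obtain ⟨S', h1, h2, _, h4⟩ := remove_list jt Finset.univ.toList (fun a b => sepOf jt a b)
    (fun a b => sepOf_symm jt a b)
  exact ⟨S', h1, h2, fun X hX => h4 X (Finset.mem_toList.mpr (Finset.mem_univ X)) hX⟩

lemma exists_terminal {E : V → V → Prop} [Finite J] [Finite V] (jt : Jointree E J) :
    ∀ (n : ℕ) (S : J → J → Set V),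
      ({t : (J × J) × V | t.2 ∈ S t.1.1 t.1.2}).ncard ≤ n →
      ∃ S', Relation.ReflTransGen (ThinStep jt) S S' ∧ (∀ a b, S' a b ⊆ S a b) ∧
        ∀ S'', ¬ ThinStep jt S' S'' := by
  intro n
  induction n with
  | zero =>
    intro S hcard
    refine ⟨S, Relation.ReflTransGen.refl, fun _ _ => subset_rfl, ?_⟩
    intro S'' hstep
    obtain ⟨i, j, X, hij, hX, hmem, _, _⟩ := hstep
    have hin : (((i, j), X) : (J × J) × V) ∈ {t : (J × J) × V | t.2 ∈ S t.1.1 t.1.2} := hmem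
    have hpos := (Set.ncard_pos (Set.toFinite _)).mpr ⟨_, hin⟩
    omega
  | succ n ih =>
    intro S hcard
    by_cases hstep : ∃ S'', ThinStep jt S S''
    · obtain ⟨S₁, hS₁⟩ := hstep
      obtain ⟨i, j, X, hij, hX, hmem, hrule, hdef⟩ := hS₁
      have hstep' : ThinStep jt S S₁ := ⟨i, j, X, hij, hX, hmem, hrule, hdef⟩
      have hsub : {t : (J × J) × V | t.2 ∈ S₁ t.1.1 t.1.2} ⊆
          {t : (J × J) × V | t.2 ∈ S t.1.1 t.1.2} \ {((i, j), X)} := by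
        rintro ⟨⟨a, b⟩, Y⟩ hY
        refine ⟨thinStep_subset hstep' a b hY, fun hm => ?_⟩
        obtain ⟨⟨rfl, rfl⟩, rfl⟩ : (a = i ∧ b = j) ∧ Y = X := by
          simpa [Prod.ext_iff] using hm
        have hY2 : Y ∈ S₁ a b := hY
        rw [hdef] at hY2
        dsimp only at hY2
        rw [if_pos (Or.inl ⟨rfl, rfl⟩)] at hY2
        exact hY2.2 rfl
      have hcard' : ({t : (J × J) × V | t.2 ∈ S₁ t.1.1 t.1.2}).ncard ≤ n := by
        have h1 := Set.ncard_le_ncard hsub (Set.toFinite _)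
        have h2 : ({t : (J × J) × V | t.2 ∈ S t.1.1 t.1.2} \ {((i, j), X)}).ncard <
            ({t : (J × J) × V | t.2 ∈ S t.1.1 t.1.2}).ncard :=
          Set.ncard_lt_ncard
            ⟨Set.diff_subset, fun hss => (hss hmem).2 rfl⟩ (Set.toFinite _)
        omega
      obtain ⟨S', g1, g2, g3⟩ := ih S₁ hcard'
      exact ⟨S', Relation.ReflTransGen.head hstep' g1,
        fun a b => (g2 a b).trans (thinStep_subset hstep' a b), g3⟩
    · exact ⟨S, Relation.ReflTransGen.refl, fun _ _ => subset_rfl,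
        fun S'' h => hstep ⟨S'', h⟩⟩

lemma thCluster_ncard_le {E : V → V → Prop} [Finite J] (jt : Jointree E J)
    (S : J → J → Set V) {w : ℕ} (h : thWidthJT jt S = w) (i : J) :
    (thClusterJT jt S i).ncard ≤ w + 1 := by
  have h1 : (thClusterJT jt S i).ncard ≤ ⨆ i, (thClusterJT jt S i).ncard :=
    le_ciSup (f := fun i => (thClusterJT jt S i).ncard)
      (Set.Finite.bddAbove (Set.finite_range _)) i
  unfold thWidthJT at h
  omega

lemma thCluster_leaf {E : V → V → Prop} (jt : Jointree E J) (S : J → J → Set V) {l : J}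
    (hl : IsLeaf jt.T l) {X : V} (hX : l ∈ jt.H X) : thClusterJT jt S l = famOf E X := by
  unfold thClusterJT
  rw [if_pos hl]
  obtain ⟨Y, hY, hu⟩ := jt.leaf_host l hl
  have hXY : X = Y := hu X hX
  ext z
  simp only [Set.mem_iUnion, Set.mem_setOf_eq]
  constructor
  · rintro ⟨X', hX', hz⟩
    rwa [show X' = X from (hu X' hX').trans hXY.symm] at hz
  · exact fun hz => ⟨X, hX, hz⟩

lemma roots_mem_of_rtg {E : V → V → Prop} {jt : Jointree E J} {S : J → J → Set V}
    (h : Relation.ReflTransGen (ThinStep jt) (fun a b => sepOf jt a b) S) :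
    ∀ a b r, isRoot E r → r ∈ sepOf jt a b → r ∈ S a b := by
  induction h with
  | refl => exact fun a b r _ h => h
  | tail _ hstep ih =>
    obtain ⟨i, j, X, _, hX, _, _, hdef⟩ := hstep
    subst hdef
    intro a b r hr hmem
    dsimp only
    split
    · exact ⟨ih a b r hr hmem, fun he => hX (he ▸ hr)⟩
    · exact ih a b r hr hmem

end AuxProof
section TwinBasics

variable {V : Type*} {E : V → V → Prop}

lemma twinDup_injective : Function.Injective (twinDup E) := by
  intro a b h
  unfold twinDup at h
  split at h <;> split at h <;> simp_all

lemma root_of_twin_root {Z : TwinVar E} (h : isRoot (twinEdge E) Z) :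
    ∃ r, Z = Sum.inl r ∧ isRoot E r := by
  cases Z with
  | inl x => exact ⟨x, rfl, fun p hp => h (Sum.inl p) hp⟩
  | inr x =>
    exfalso
    have hx := x.2
    simp only [isRoot, not_forall, not_not] at hx
    obtain ⟨p, hp⟩ := hx
    by_cases hr : isRoot E p
    · exact h (Sum.inl p) ⟨hr, hp⟩
    · exact h (Sum.inr ⟨p, hr⟩) hp

lemma famOf_twin_inl (X : V) :
    famOf (twinEdge E) (Sum.inl X : TwinVar E) = Sum.inl '' famOf E X := by
  unfold famOf
  ext z
  cases z with
  | inl y =>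
    simp only [Set.mem_insert_iff, Set.mem_setOf_eq, Set.mem_image]
    constructor
    · rintro (h | h)
      · exact ⟨X, Or.inl rfl, by rw [Sum.inl.injEq] at h ⊢; exact h.symm⟩
      · exact ⟨y, Or.inr h, rfl⟩
    · rintro ⟨a, ha, hay⟩
      rw [Sum.inl.injEq] at hay
      subst hay
      rcases ha with rfl | ha
      · exact Or.inl rfl
      · exact Or.inr ha
  | inr y =>
    simp only [Set.mem_insert_iff, Set.mem_setOf_eq, Set.mem_image]
    constructor
    · rintro (h | h)
      · exact absurd h (by simp)
      · exact h.elim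
    · rintro ⟨a, _, h⟩
      exact absurd h (by simp)

lemma famOf_twin_inr (x : {x : V // ¬ isRoot E x}) :
    famOf (twinEdge E) (Sum.inr x : TwinVar E) = twinDup E '' famOf E x.1 := by
  unfold famOf
  ext z
  simp only [Set.mem_insert_iff, Set.mem_setOf_eq, Set.mem_image]
  constructor
  · rintro (rfl | h)
    · exact ⟨x.1, Or.inl rfl, by unfold twinDup; rw [dif_neg x.2]⟩
    · cases z with
      | inl p => exact ⟨p, Or.inr h.2, by unfold twinDup; rw [dif_pos h.1]⟩
      | inr q => exact ⟨q.1, Or.inr h, by unfold twinDup; rw [dif_neg q.2]⟩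
  · rintro ⟨p, hp, rfl⟩
    rcases hp with rfl | hp
    · left
      unfold twinDup
      rw [dif_neg x.2]
    · right
      by_cases hr : isRoot E p
      · unfold twinDup
        rw [dif_pos hr]
        exact ⟨hr, hp⟩
      · unfold twinDup
        rw [dif_neg hr]
        exact hp

lemma ncard_famOf_twin_inl (X : V) :
    (famOf (twinEdge E) (Sum.inl X : TwinVar E)).ncard = (famOf E X).ncard := by
  rw [famOf_twin_inl, Set.ncard_image_of_injective _ Sum.inl_injective]

lemma ncard_famOf_twin_inr (x : {x : V // ¬ isRoot E x}) :
    (famOf (twinEdge E) (Sum.inr x : TwinVar E)).ncard = (famOf E x.1).ncard := by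
  rw [famOf_twin_inr, Set.ncard_image_of_injective _ twinDup_injective]

end TwinBasics

section CherryConstruction

variable {V : Type*} {J : Type*} {E : V → V → Prop}

/-- Cherry leaves attached to the leaves of the base jointree: a `false` cherry hosts
the base family of the leaf, a `true` cherry (present only when the hosted family is
of an internal variable) hosts the duplicate family. -/
def Cherry (jt : Jointree E J) : Type _ :=
  {p : J × Bool // IsLeaf jt.T p.1 ∧ (p.2 = false ∨ ∃ X, p.1 ∈ jt.H X ∧ ¬ isRoot E X)}

instance (jt : Jointree E J) [Finite J] : Finite (Cherry jt) := Subtype.finite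

def cadj (jt : Jointree E J) : (J ⊕ Cherry jt) → (J ⊕ Cherry jt) → Prop
  | Sum.inl i, Sum.inl j => jt.T.Adj i j
  | Sum.inl i, Sum.inr c => c.1.1 = i
  | Sum.inr c, Sum.inl j => c.1.1 = j
  | Sum.inr _, Sum.inr _ => False

/-- The tree of the twin jointree: the base tree plus the pendant cherry leaves. -/
def cT (jt : Jointree E J) : SimpleGraph (J ⊕ Cherry jt) where
  Adj := cadj jt
  symm := by
    constructor
    rintro (i | c) (j | d) h
    · exact jt.T.symm.symm _ _ h
    · exact h
    · exact h
    · exact h.elim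
  loopless := by
    constructor
    rintro (i | c) h
    · exact jt.T.loopless.irrefl i h
    · exact h.elim

def cproj (jt : Jointree E J) : (J ⊕ Cherry jt) → J := Sum.elim id (fun c => c.1.1)

lemma proj_reachable (jt : Jointree E J) {i j : J} {a b : J ⊕ Cherry jt}
    (h : ((cT jt).deleteEdges {s(Sum.inl i, Sum.inl j)}).Reachable a b) :
    (jt.T.deleteEdges {s(i, j)}).Reachable (cproj jt a) (cproj jt b) := by
  obtain ⟨p⟩ := h
  induction p with
  | nil => exact SimpleGraph.Reachable.refl _
  | @cons x y _ hadj q ih =>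
    rw [SimpleGraph.deleteEdges_adj] at hadj
    obtain ⟨h1, h2⟩ := hadj
    cases x with
    | inl i' =>
      cases y with
      | inl j' =>
        refine (SimpleGraph.Adj.reachable ?_).trans ih
        rw [SimpleGraph.deleteEdges_adj]
        refine ⟨h1, fun hm => h2 ?_⟩
        rcases Sym2.eq_iff.mp (Set.mem_singleton_iff.mp hm) with ⟨rfl, rfl⟩ | ⟨rfl, rfl⟩
        · exact rfl
        · rw [Sym2.eq_swap]
          exact rfl
      | inr c =>
        simp only [cproj, Sum.elim_inl, Sum.elim_inr] at ih ⊢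
        rw [← h1]
        exact ih
    | inr c =>
      cases y with
      | inl j' =>
        simp only [cproj, Sum.elim_inl, Sum.elim_inr] at ih ⊢
        rw [h1]
        exact ih
      | inr d => exact h1.elim

lemma cT_reach_inl (jt : Jointree E J) (a : J ⊕ Cherry jt) :
    (cT jt).Reachable a (Sum.inl (cproj jt a)) := by
  cases a with
  | inl i => exact SimpleGraph.Reachable.refl _
  | inr c =>
    exact SimpleGraph.Adj.reachable
      (show cadj jt (Sum.inr c) (Sum.inl c.1.1) from rfl)

def cHom (jt : Jointree E J) : jt.T →g cT jt := ⟨Sum.inl, fun {a b} h => h⟩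

lemma cT_connected (jt : Jointree E J) : (cT jt).Connected := by
  rw [SimpleGraph.connected_iff]
  have hne : Nonempty J := jt.isTree.isConnected.nonempty
  refine ⟨?_, ⟨Sum.inl hne.some⟩⟩
  intro a b
  refine (cT_reach_inl jt a).trans (SimpleGraph.Reachable.trans ?_ (cT_reach_inl jt b).symm)
  exact SimpleGraph.Reachable.map (cHom jt)
    (jt.isTree.isConnected.preconnected (cproj jt a) (cproj jt b))

lemma cT_isTree (jt : Jointree E J) : (cT jt).IsTree := by
  refine ⟨cT_connected jt, ?_⟩
  rw [SimpleGraph.isAcyclic_iff_forall_adj_isBridge]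
  rintro (i | c) (j | d) hadj
  · rw [SimpleGraph.isBridge_iff]
    intro hr
    exact tree_bridge jt.isTree.IsAcyclic (show jt.T.Adj i j from hadj)
      (proj_reachable jt (i := i) (j := j) hr)
  · -- inl i, inr d : hadj : d.1.1 = i
    rw [SimpleGraph.isBridge_iff]
    intro hr
    have hpend : ∀ b, (cT jt).Adj (Sum.inr d) b → b = Sum.inl i := by
      rintro (j' | d') h
      · exact congrArg Sum.inl ((show d.1.1 = j' from h).symm.trans hadj)
      · exact h.elim
    rw [show s(Sum.inl i, (Sum.inr d : J ⊕ Cherry jt)) = s(Sum.inr d, Sum.inl i)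
      from Sym2.eq_swap] at hr
    have := pendant_reachable' hpend _ hr.symm
    simp at this
  · -- inr c, inl j : hadj : c.1.1 = j
    rw [SimpleGraph.isBridge_iff]
    intro hr
    have hpend : ∀ b, (cT jt).Adj (Sum.inr c) b → b = Sum.inl j := by
      rintro (j' | d') h
      · exact congrArg Sum.inl ((show c.1.1 = j' from h).symm.trans hadj)
      · exact h.elim
    have := pendant_reachable' hpend _ hr
    simp at this
  · exact hadj.elim

/-- The host function of the twin jointree. -/
def cH (jt : Jointree E J) : TwinVar E → Set (J ⊕ Cherry jt)
  | Sum.inl X => {b | ∃ c : Cherry jt, b = Sum.inr c ∧ c.1.2 = false ∧ c.1.1 ∈ jt.H X}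
  | Sum.inr x => {b | ∃ c : Cherry jt, b = Sum.inr c ∧ c.1.2 = true ∧ c.1.1 ∈ jt.H x.1}

lemma cherry_isLeaf (jt : Jointree E J) (c : Cherry jt) : IsLeaf (cT jt) (Sum.inr c) := by
  refine ⟨Sum.inl c.1.1, rfl, ?_⟩
  rintro (j | d) h
  · exact congrArg Sum.inl (show c.1.1 = j from h).symm
  · exact h.elim

lemma inl_not_isLeaf (jt : Jointree E J) (i : J) : ¬ IsLeaf (cT jt) (Sum.inl i) := by
  rintro ⟨k, hk, huniq⟩
  by_cases hi : IsLeaf jt.T i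
  · obtain ⟨j, hj, -⟩ := id hi
    have h1 := huniq (Sum.inl j) hj
    have h2 := huniq (Sum.inr ⟨(i, false), hi, Or.inl rfl⟩) rfl
    rw [← h2] at h1
    simp at h1
  · cases k with
    | inl j =>
      have hex : ¬ ∀ j', jt.T.Adj i j' → j' = j := fun hc => hi ⟨j, hk, hc⟩
      push_neg at hex
      obtain ⟨j', hj', hne⟩ := hex
      exact hne (Sum.inl.inj (huniq (Sum.inl j') hj'))
    | inr c =>
      exact hi ((show c.1.1 = i from hk) ▸ c.2.1)

/-- The twin jointree produced from a base jointree by attaching cherry leaves. -/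
def cJT (jt : Jointree E J) : Jointree (twinEdge E) (J ⊕ Cherry jt) where
  T := cT jt
  isTree := cT_isTree jt
  H := cH jt
  hosts_nonempty := by
    rintro (X | x)
    · obtain ⟨l, hl⟩ := jt.hosts_nonempty X
      exact ⟨Sum.inr ⟨(l, false), jt.hosts_leaf X l hl, Or.inl rfl⟩, ⟨_, rfl, rfl, hl⟩⟩
    · obtain ⟨l, hl⟩ := jt.hosts_nonempty x.1
      exact ⟨Sum.inr ⟨(l, true), jt.hosts_leaf x.1 l hl, Or.inr ⟨x.1, hl, x.2⟩⟩,
        ⟨_, rfl, rfl, hl⟩⟩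
  hosts_leaf := by
    rintro (X | x) b hb <;> obtain ⟨c, rfl, -, -⟩ := hb <;> exact cherry_isLeaf jt c
  leaf_host := by
    rintro (i | c) hleaf
    · exact absurd hleaf (inl_not_isLeaf jt i)
    · obtain ⟨X, hX, hXu⟩ := jt.leaf_host c.1.1 c.2.1
      cases hb : c.1.2 with
      | false =>
        refine ⟨Sum.inl X, ⟨c, rfl, hb, hX⟩, ?_⟩
        rintro (Y | y) hY
        · obtain ⟨c', hc', h2, h3⟩ := hY
          obtain rfl : c' = c := (Sum.inr.inj hc').symm
          exact congrArg Sum.inl (hXu Y h3)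
        · obtain ⟨c', hc', h2, _⟩ := hY
          obtain rfl : c' = c := (Sum.inr.inj hc').symm
          rw [hb] at h2
          exact absurd h2 (by simp)
      | true =>
        have hint : ¬ isRoot E X := by
          rcases c.2.2 with h | ⟨X₀, hX₀, hr⟩
          · rw [hb] at h; exact absurd h (by simp)
          · rwa [hXu X₀ hX₀] at hr
        refine ⟨Sum.inr ⟨X, hint⟩, ⟨c, rfl, hb, hX⟩, ?_⟩
        rintro (Y | y) hY
        · obtain ⟨c', hc', h2, _⟩ := hY
          obtain rfl : c' = c := (Sum.inr.inj hc').symm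
          rw [hb] at h2
          exact absurd h2 (by simp)
        · obtain ⟨c', hc', h2, h3⟩ := hY
          obtain rfl : c' = c := (Sum.inr.inj hc').symm
          exact congrArg Sum.inr (Subtype.ext (hXu y.1 h3))

end CherryConstruction
section ClusterBound

variable {V : Type*} {J : Type*} {E : V → V → Prop}

lemma twinDup_eq_inl {p r : V} (h : twinDup E p = Sum.inl r) : p = r := by
  unfold twinDup at h
  split at h
  · exact Sum.inl.inj h
  · exact absurd h (by simp)

lemma mem_sideVars_proj (jt : Jointree E J) {i j : J} {r : V}
    (h : (Sum.inl r : TwinVar E) ∈ sideVars (cJT jt) (Sum.inl i) (Sum.inl j)) :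
    r ∈ sideVars jt i j := by
  obtain ⟨Y, l, hl, hfam, hreach⟩ := h
  have hreach' := proj_reachable jt hreach
  cases Y with
  | inl X =>
    obtain ⟨c, rfl, -, hc⟩ := hl
    rw [famOf_twin_inl] at hfam
    obtain ⟨r', hr', hrr⟩ := hfam
    obtain rfl : r' = r := Sum.inl.inj hrr
    exact ⟨X, c.1.1, hc, hr', hreach'⟩
  | inr x =>
    obtain ⟨c, rfl, -, hc⟩ := hl
    rw [famOf_twin_inr] at hfam
    obtain ⟨p, hp, hpd⟩ := hfam
    obtain rfl : p = r := twinDup_eq_inl hpd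
    exact ⟨x.1, c.1.1, hc, hp, hreach'⟩

lemma sep_proj (jt : Jointree E J) {i j : J} {r : V}
    (h : (Sum.inl r : TwinVar E) ∈ sepOf (cJT jt) (Sum.inl i) (Sum.inl j)) :
    r ∈ sepOf jt i j :=
  ⟨mem_sideVars_proj jt h.1, mem_sideVars_proj jt h.2⟩

lemma sideVars_base_leaf (jt : Jointree E J) {i j : J} (hi : IsLeaf jt.T i)
    {X : V} (hX : i ∈ jt.H X) (hij : jt.T.Adj i j) :
    sideVars jt i j ⊆ famOf E X := by
  obtain ⟨j₀, hj₀, hju⟩ := hi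
  have hpend : ∀ b, jt.T.Adj i b → b = j := fun b hb => (hju b hb).trans (hju j hij).symm
  intro r hr
  obtain ⟨Y, l, hl, hfam, hreach⟩ := hr
  have hli : l = i := pendant_reachable' hpend l hreach
  subst hli
  obtain ⟨X₀, hX₀, hXu⟩ := jt.leaf_host l ⟨j₀, hj₀, hju⟩
  rwa [(hXu Y hl).trans (hXu X hX).symm] at hfam

lemma sep_cherry (jt : Jointree E J) {i : J} {c : Cherry jt} (hci : c.1.1 = i)
    {X : V} (hX : i ∈ jt.H X) {r : V}
    (h : (Sum.inl r : TwinVar E) ∈ sepOf (cJT jt) (Sum.inl i) (Sum.inr c)) :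
    r ∈ famOf E X := by
  obtain ⟨Y, l, hl, hfam, hreach⟩ := h.2
  have hpend : ∀ b, (cT jt).Adj (Sum.inr c) b → b = Sum.inl i := by
    rintro (j' | d) hadj
    · exact congrArg Sum.inl ((show c.1.1 = j' from hadj).symm.trans hci)
    · exact hadj.elim
  have hlc : l = Sum.inr c := pendant_reachable' hpend l hreach
  subst hlc
  obtain ⟨X₀, hX₀, hXu⟩ := jt.leaf_host i (hci ▸ c.2.1)
  cases Y with
  | inl X' =>
    obtain ⟨c', hc', -, hc'H⟩ := hl
    obtain rfl : c' = c := (Sum.inr.inj hc').symm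
    have hXX : X' = X := (hXu X' (hci ▸ hc'H)).trans (hXu X hX).symm
    subst hXX
    rw [famOf_twin_inl] at hfam
    obtain ⟨r', hr', hrr⟩ := hfam
    exact (Sum.inl.inj hrr) ▸ hr'
  | inr x =>
    obtain ⟨c', hc', -, hc'H⟩ := hl
    obtain rfl : c' = c := (Sum.inr.inj hc').symm
    have hxX : x.1 = X := (hXu x.1 (hci ▸ hc'H)).trans (hXu X hX).symm
    rw [famOf_twin_inr] at hfam
    obtain ⟨p, hp, hpd⟩ := hfam
    obtain rfl : p = r := twinDup_eq_inl hpd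
    rwa [hxX] at hp

/-- The key width bound: every cluster of the (fully thinned) twin jointree has at
most `w + 1` variables. -/
lemma twin_cluster_bound [Finite J] [Finite V] (jt : Jointree E J)
    {Sb : J → J → Set V}
    (hSb : Relation.ReflTransGen (ThinStep jt) (fun a b => sepOf jt a b) Sb)
    {w : ℕ} (hw : ∀ i : J, (thClusterJT jt Sb i).ncard ≤ w + 1)
    {St : (J ⊕ Cherry jt) → (J ⊕ Cherry jt) → Set (TwinVar E)}
    (hsub : ∀ a b, St a b ⊆ sepOf (cJT jt) a b)
    (hroots : ∀ Z, ¬ isRoot (twinEdge E) Z → ∀ a b, (cT jt).Adj a b → Z ∉ St a b)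
    (a : J ⊕ Cherry jt) :
    (thClusterJT (cJT jt) St a).ncard ≤ w + 1 := by
  have hfam_le : ∀ X : V, (famOf E X).ncard ≤ w + 1 := by
    intro X
    obtain ⟨l, hl⟩ := jt.hosts_nonempty X
    have hcl := hw l
    rwa [thCluster_leaf jt Sb (jt.hosts_leaf X l hl) hl] at hcl
  cases a with
  | inr c =>
    obtain ⟨X₀, hX₀, hXu⟩ := jt.leaf_host c.1.1 c.2.1
    cases hb : c.1.2 with
    | false =>
      rw [thCluster_leaf (cJT jt) St (show IsLeaf (cJT jt).T (Sum.inr c) from cherry_isLeaf jt c)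
        (show Sum.inr c ∈ (cJT jt).H (Sum.inl X₀) from ⟨c, rfl, hb, hX₀⟩)]
      rw [ncard_famOf_twin_inl]
      exact hfam_le X₀
    | true =>
      have hint : ¬ isRoot E X₀ := by
        rcases c.2.2 with h | ⟨X₁, hX₁, hr⟩
        · rw [hb] at h; exact absurd h (by simp)
        · rwa [hXu X₁ hX₁] at hr
      rw [thCluster_leaf (cJT jt) St (show IsLeaf (cJT jt).T (Sum.inr c) from cherry_isLeaf jt c)
        (show Sum.inr c ∈ (cJT jt).H (Sum.inr ⟨X₀, hint⟩) from ⟨c, rfl, hb, hX₀⟩)]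
      rw [ncard_famOf_twin_inr]
      exact hfam_le X₀
  | inl i =>
    have hcl : thClusterJT (cJT jt) St (Sum.inl i) =
        ⋃ b ∈ {b | (cT jt).Adj (Sum.inl i) b}, St (Sum.inl i) b := by
      unfold thClusterJT
      rw [if_neg (show ¬ IsLeaf (cJT jt).T (Sum.inl i) from inl_not_isLeaf jt i)]
      rfl
    rw [hcl]
    have hroot_of_mem : ∀ (b : J ⊕ Cherry jt), (cT jt).Adj (Sum.inl i) b →
        ∀ Z ∈ St (Sum.inl i) b, ∃ r, Z = Sum.inl r ∧ isRoot E r := by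
      intro b hb Z hZ
      refine root_of_twin_root (Z := Z) ?_
      by_contra hc
      exact hroots Z hc _ _ hb hZ
    by_cases hi : IsLeaf jt.T i
    · obtain ⟨X₀, hX₀, -⟩ := jt.leaf_host i hi
      have hsubU : (⋃ b ∈ {b | (cT jt).Adj (Sum.inl i) b}, St (Sum.inl i) b) ⊆
          Sum.inl '' famOf E X₀ := by
        intro Z hZ
        rw [Set.mem_iUnion₂] at hZ
        obtain ⟨b, hb, hZb⟩ := hZ
        obtain ⟨r, rfl, hr⟩ := hroot_of_mem b hb Z hZb
        have hZsep := hsub _ _ hZb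
        cases b with
        | inl j =>
          exact ⟨r, sideVars_base_leaf jt hi hX₀ hb (sep_proj jt hZsep).1, rfl⟩
        | inr c =>
          exact ⟨r, sep_cherry jt hb hX₀ hZsep, rfl⟩
      calc (⋃ b ∈ {b | (cT jt).Adj (Sum.inl i) b}, St (Sum.inl i) b).ncard
          ≤ (Sum.inl '' famOf E X₀ : Set (TwinVar E)).ncard :=
            Set.ncard_le_ncard hsubU (Set.toFinite _)
        _ = (famOf E X₀).ncard := Set.ncard_image_of_injective _ Sum.inl_injective
        _ ≤ w + 1 := hfam_le X₀
    · have hsubU : (⋃ b ∈ {b | (cT jt).Adj (Sum.inl i) b}, St (Sum.inl i) b) ⊆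
          Sum.inl '' thClusterJT jt Sb i := by
        intro Z hZ
        rw [Set.mem_iUnion₂] at hZ
        obtain ⟨b, hb, hZb⟩ := hZ
        obtain ⟨r, rfl, hr⟩ := hroot_of_mem b hb Z hZb
        have hZsep := hsub _ _ hZb
        cases b with
        | inr c => exact absurd ((show c.1.1 = i from hb) ▸ c.2.1) hi
        | inl j =>
          have hrS : r ∈ Sb i j := roots_mem_of_rtg hSb i j r hr (sep_proj jt hZsep)
          refine ⟨r, ?_, rfl⟩
          unfold thClusterJT
          rw [if_neg hi, Set.mem_iUnion₂]
          exact ⟨j, hb, hrS⟩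
      calc (⋃ b ∈ {b | (cT jt).Adj (Sum.inl i) b}, St (Sum.inl i) b).ncard
          ≤ (Sum.inl '' thClusterJT jt Sb i : Set (TwinVar E)).ncard :=
            Set.ncard_le_ncard hsubU (Set.toFinite _)
        _ = (thClusterJT jt Sb i).ncard := Set.ncard_image_of_injective _ Sum.inl_injective
        _ ≤ w + 1 := hw i

end ClusterBound
section StarJointree

variable {V : Type*}

/-- The star graph on `Option V`, centered at `none`. -/
def starT (V : Type*) : SimpleGraph (Option V) where
  Adj a b := a ≠ b ∧ (a = none ∨ b = none)
  symm := by
    constructor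
    rintro a b ⟨h1, h2⟩
    exact ⟨h1.symm, h2.symm⟩
  loopless := ⟨fun a h => h.1 rfl⟩

lemma starT_pendant (x : V) : ∀ b, (starT V).Adj (some x) b → b = none := by
  rintro b ⟨h1, h2 | h3⟩
  · exact absurd h2 (Option.some_ne_none x)
  · exact h3

lemma starT_isTree : (starT V).IsTree := by
  constructor
  · rw [SimpleGraph.connected_iff]
    refine ⟨?_, ⟨none⟩⟩
    have hrn : ∀ a : Option V, (starT V).Reachable a none := by
      intro a
      cases a with
      | none => exact SimpleGraph.Reachable.refl _
      | some x => exact SimpleGraph.Adj.reachable ⟨Option.some_ne_none x, Or.inr rfl⟩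
    exact fun a b => (hrn a).trans (hrn b).symm
  · rw [SimpleGraph.isAcyclic_iff_forall_adj_isBridge]
    intro v w hadj
    rw [SimpleGraph.isBridge_iff]
    intro hr
    rcases hadj with ⟨hne, rfl | rfl⟩
    · -- v = none
      cases w with
      | none => exact hne rfl
      | some x =>
        rw [show s((none : Option V), some x) = s(some x, none) from Sym2.eq_swap] at hr
        have := pendant_reachable' (starT_pendant x) _ hr.symm
        simp at this
    · -- w = none
      cases v with
      | none => exact hne rfl
      | some x =>
        have := pendant_reachable' (starT_pendant x) _ hr
        simp at this

/-- A (typically very wide) jointree for any DAG: the star with one leaf per variable. -/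
def starJT (E : V → V → Prop) : Jointree E (Option V) where
  T := starT V
  isTree := starT_isTree
  H := fun X => {j | j = some X ∨ (j = none ∧ ∀ y : V, y = X)}
  hosts_nonempty := fun X => ⟨some X, Or.inl rfl⟩
  hosts_leaf := by
    intro X j hj
    rcases hj with rfl | ⟨rfl, hall⟩
    · refine ⟨none, ⟨Option.some_ne_none X, Or.inr rfl⟩, ?_⟩
      exact fun b hb => starT_pendant X b hb
    · refine ⟨some X, ⟨(Option.some_ne_none X).symm, Or.inl rfl⟩, ?_⟩
      rintro b ⟨h1, -⟩
      cases b with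
      | none => exact absurd rfl h1
      | some y => exact congrArg some (hall y)
  leaf_host := by
    intro j hleaf
    cases j with
    | some x =>
      refine ⟨x, Or.inl rfl, ?_⟩
      intro Y hY
      rcases hY with h | ⟨h, _⟩
      · exact (Option.some.inj h).symm
      · exact absurd h (Option.some_ne_none x)
    | none =>
      obtain ⟨k, hk, hku⟩ := hleaf
      have hkne : k ≠ none := fun h => hk.1 (h.symm ▸ rfl)
      obtain ⟨y₀, rfl⟩ : ∃ y₀, k = some y₀ := by
        cases k with
        | none => exact absurd rfl hkne
        | some y => exact ⟨y, rfl⟩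
      have hall : ∀ y : V, y = y₀ := by
        intro y
        have := hku (some y) ⟨(Option.some_ne_none y).symm, Or.inl rfl⟩
        exact Option.some.inj this
      refine ⟨y₀, Or.inr ⟨rfl, hall⟩, ?_⟩
      intro Y hY
      rcases hY with h | ⟨-, hall'⟩
      · exact absurd h (Option.some_ne_none Y).symm
      · exact (hall' y₀).symm

end StarJointree
/-- the causal treewidth of the twin network is at most twice the causal
treewidth of the base network plus one. -/
theorem twin_causal_treewidth_le {V : Type*} [Fintype V]
    (E : V → V → Prop) (hE : IsAcyclicRel E) :
    causalTreewidth (twinEdge E) ≤ 2 * causalTreewidth E + 1 := by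
  classical
  -- the defining set of the causal treewidth of the base network
  set base := {w : ℕ | ∃ (J : Type _) (_ : Finite J) (jt : Jointree E J)
      (S : J → J → Set V), IsThinning jt S ∧ thWidthJT jt S = w} with hbdef
  have hctw : causalTreewidth E = sInf base := rfl
  -- it is nonempty, thanks to the star jointree
  have hbase : base.Nonempty := by
    obtain ⟨S, h1, -, h3⟩ :=
      exists_terminal (starJT E) _ (fun a b => sepOf (starJT E) a b) le_rfl
    exact ⟨thWidthJT (starJT E) S, Option V, inferInstance, starJT E, S, ⟨h1, h3⟩, rfl⟩
  -- an optimal thinned jointree for the base network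
  obtain ⟨J, hJ, jt, Sb, hSbIsThin, hwb⟩ := Nat.sInf_mem hbase
  haveI := hJ
  haveI : Nonempty J := jt.isTree.isConnected.nonempty
  -- thin the twin jointree: first remove all functional variables everywhere,
  -- then continue to exhaustion
  obtain ⟨S₁, hr1, hs1, hroots1⟩ := remove_all (cJT jt)
  obtain ⟨St, hr2, hs2, hterm⟩ := exists_terminal (cJT jt) _ S₁ le_rfl
  have hthin : IsThinning (cJT jt) St := ⟨hr1.trans hr2, hterm⟩
  have hclb : ∀ a, (thClusterJT (cJT jt) St a).ncard ≤ sInf base + 1 :=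
    twin_cluster_bound jt hSbIsThin.1
      (fun i => thCluster_ncard_le jt Sb hwb i)
      (fun a b => (hs2 a b).trans (hs1 a b))
      (fun Z hZ a b hadj hm => hroots1 Z hZ a b hadj (hs2 a b hm))
  haveI : Nonempty (J ⊕ Cherry jt) := ⟨Sum.inl (Classical.arbitrary J)⟩
  have hsup : (⨆ a, (thClusterJT (cJT jt) St a).ncard) ≤ sInf base + 1 := ciSup_le hclb
  have hwidth : thWidthJT (cJT jt) St ≤ sInf base := by
    unfold thWidthJT
    omega
  have hfinal : causalTreewidth (twinEdge E) ≤ thWidthJT (cJT jt) St := by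
    unfold causalTreewidth
    exact Nat.sInf_le ⟨J ⊕ Cherry jt, inferInstance, cJT jt, St, hthin, rfl⟩
  rw [hctw]
  omega

end Counterfactual
end

section
/- Let G be a base network with elimination order π, let G^N be its N-world network with respect to a set R of roots, and let G^N_1,...,G^N_n be the N-world graph sequence induced by π. Then for every index i, every variable X present in G_i, and every j ∈ {1,...,N}, we have G^N_i(X^j) ⊆ ⋃_{k=1}^N (G_i(X))^k. -/
namespace Counterfactual

attribute [local instance] Classical.propDecidable

/-- Projection of an `N`-world variable to its base variable. -/
def nproj {V : Type*} {R : Set V} {N : ℕ} : NVar R N → V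
  | Sum.inl p => p.1
  | Sum.inr q => q.1.1

lemma nproj_ndup {V : Type*} (R : Set V) (N : ℕ) (x : V) (k : Fin N) :
    nproj (ndup R N x k) = x := by
  unfold ndup
  split <;> rfl

lemma exists_ndup {V : Type*} {R : Set V} {N : ℕ} (hN : 1 ≤ N) (v : NVar R N) :
    ∃ k : Fin N, ndup R N (nproj v) k = v := by
  cases v with
  | inl p =>
      exact ⟨⟨0, hN⟩, by simp [ndup, nproj, p.2]⟩
  | inr q =>
      refine ⟨q.2, ?_⟩
      simp [ndup, nproj, q.1.2]

/-- Invariant maintained while eliminating the duplicates of `z` one by one. -/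
def BlockInv {V : Type*} {R : Set V} {N : ℕ} (G : SimpleGraph V) (z : V)
    (A : Set (NVar R N)) (H : SimpleGraph (NVar R N)) : Prop :=
  ∀ u v, H.Adj u v → u ∉ A ∧ v ∉ A ∧
    (nproj u = nproj v ∨ G.Adj (nproj u) (nproj v) ∨
      (G.Adj (nproj u) z ∧ G.Adj z (nproj v)))

lemma blockInv_mono {V : Type*} {R : Set V} {N : ℕ} {G : SimpleGraph V} {z : V}
    {A B : Set (NVar R N)} {H : SimpleGraph (NVar R N)}
    (h : BlockInv G z B H) (hAB : A ⊆ B) : BlockInv G z A H := by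
  intro u v huv
  obtain ⟨h1, h2, h3⟩ := h u v huv
  exact ⟨fun hu => h1 (hAB hu), fun hv => h2 (hAB hv), h3⟩

lemma blockInv_step {V : Type*} {R : Set V} {N : ℕ} {G : SimpleGraph V} {z : V}
    {A : Set (NVar R N)} {H : SimpleGraph (NVar R N)}
    (hQ : BlockInv G z A H) {w : NVar R N} (hw : nproj w = z) :
    BlockInv G z (insert w A) (eliminate H w) := by
  intro u v huv
  obtain ⟨hne, huw, hvw, hadj⟩ := huv
  rcases hadj with h | ⟨h1, h2⟩
  · obtain ⟨ha, hb, hc⟩ := hQ u v h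
    exact ⟨by simp [huw, ha], by simp [hvw, hb], hc⟩
  · obtain ⟨ha, _, hc⟩ := hQ u w h1
    obtain ⟨_, hb, hd⟩ := hQ w v h2
    refine ⟨by simp [huw, ha], by simp [hvw, hb], ?_⟩
    rw [hw] at hc hd
    have hu' : nproj u = z ∨ G.Adj (nproj u) z := by
      rcases hc with h | h | ⟨h, _⟩
      · exact Or.inl h
      · exact Or.inr h
      · exact Or.inr h
    have hv' : nproj v = z ∨ G.Adj z (nproj v) := by
      rcases hd with h | h | ⟨_, h⟩
      · exact Or.inl h.symm
      · exact Or.inr h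
      · exact Or.inr h
    rcases hu' with h | h <;> rcases hv' with h' | h'
    · exact Or.inl (h.trans h'.symm)
    · exact Or.inr (Or.inl (h ▸ h'))
    · exact Or.inr (Or.inl (h' ▸ h))
    · exact Or.inr (Or.inr ⟨h, h'⟩)

lemma blockInv_fold {V : Type*} {R : Set V} {N : ℕ} {G : SimpleGraph V} {z : V} :
    ∀ (l : List (NVar R N)) (A : Set (NVar R N)) (H : SimpleGraph (NVar R N)),
      (∀ w ∈ l, nproj w = z) → BlockInv G z A H →
      BlockInv G z (A ∪ {x | x ∈ l}) (l.foldl eliminate H)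
  | [], A, H, _, hQ => by
      intro u v huv
      obtain ⟨h1, h2, h3⟩ := hQ u v huv
      refine ⟨fun hx => ?_, fun hx => ?_, h3⟩ <;>
        · rcases (Set.mem_union _ _ _).1 hx with h | h
          · first
              | exact h1 h
              | exact h2 h
          · simp at h
  | w :: l, A, H, hl, hQ => by
      have step := blockInv_step hQ (hl w (by simp))
      have ih := blockInv_fold l (insert w A) (eliminate H w)
        (fun x hx => hl x (by simp [hx])) step
      refine blockInv_mono ih ?_
      intro x hx
      rcases hx with hx | hx
      · exact Or.inl (Set.mem_insert_iff.mpr (Or.inr hx))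
      · simp only [List.mem_cons] at hx
        rcases hx with rfl | hx
        · exact Or.inl (Set.mem_insert _ _)
        · exact Or.inr hx

/-- Eliminating the whole block of duplicates of `z` corresponds to eliminating `z`. -/
lemma elimNBlock_rel {V : Type*} {R : Set V} {N : ℕ} {G : SimpleGraph V}
    {H : SimpleGraph (NVar R N)} (z : V)
    (h : ∀ u v, H.Adj u v → nproj u = nproj v ∨ G.Adj (nproj u) (nproj v)) :
    ∀ u v, (elimNBlock R N H z).Adj u v →
      nproj u = nproj v ∨ (eliminate G z).Adj (nproj u) (nproj v) := by
  have hQ : BlockInv G z (∅ : Set (NVar R N)) H := by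
    intro u v huv
    refine ⟨by simp, by simp, ?_⟩
    rcases h u v huv with h' | h'
    · exact Or.inl h'
    · exact Or.inr (Or.inl h')
  intro u v huv
  unfold elimNBlock at huv
  by_cases hz : z ∈ R
  · rw [dif_pos hz] at huv
    have := blockInv_step (w := (Sum.inl ⟨z, hz⟩ : NVar R N)) hQ rfl
    obtain ⟨hu, hv, hd⟩ := this u v huv
    have hnu : ∀ x : NVar R N, x ∉ insert (Sum.inl ⟨z, hz⟩ : NVar R N) (∅ : Set (NVar R N)) →
        nproj x ≠ z := by
      rintro (p | q) hx hpz
      · apply hx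
        simp only [nproj] at hpz
        subst hpz
        exact Set.mem_insert _ _
      · simp only [nproj] at hpz
        exact q.1.2 (hpz ▸ hz)
    rcases hd with hd | hd | hd
    · exact Or.inl hd
    · by_cases he : nproj u = nproj v
      · exact Or.inl he
      · exact Or.inr ⟨he, hnu u hu, hnu v hv, Or.inl hd⟩
    · by_cases he : nproj u = nproj v
      · exact Or.inl he
      · exact Or.inr ⟨he, hnu u hu, hnu v hv, Or.inr hd⟩
  · rw [dif_neg hz] at huv
    have := blockInv_fold (G := G) (z := z)
      (List.ofFn (fun k : Fin N => (Sum.inr (⟨z, hz⟩, k) : NVar R N))) ∅ H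
      (by intro w hw; rw [List.mem_ofFn] at hw; obtain ⟨k, rfl⟩ := hw; rfl) hQ
    obtain ⟨hu, hv, hd⟩ := this u v huv
    have hnu : ∀ x : NVar R N,
        x ∉ (∅ : Set (NVar R N)) ∪
          {y | y ∈ List.ofFn (fun k : Fin N => (Sum.inr (⟨z, hz⟩, k) : NVar R N))} →
        nproj x ≠ z := by
      rintro (p | q) hx hpz
      · simp only [nproj] at hpz
        exact hz (hpz ▸ p.2)
      · apply hx
        right
        simp only [Set.mem_setOf_eq, List.mem_ofFn]
        refine ⟨q.2, ?_⟩
        simp only [nproj] at hpz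
        cases q with
        | mk a b => cases a with
          | mk a' ha' =>
            simp only at hpz
            subst hpz
            rfl
    rcases hd with hd | hd | hd
    · exact Or.inl hd
    · by_cases he : nproj u = nproj v
      · exact Or.inl he
      · exact Or.inr ⟨he, hnu u hu, hnu v hv, Or.inl hd⟩
    · by_cases he : nproj u = nproj v
      · exact Or.inl he
      · exact Or.inr ⟨he, hnu u hu, hnu v hv, Or.inr hd⟩

lemma moral_rel {V : Type*} (E : V → V → Prop) (R : Set V) (N : ℕ) :
    ∀ u v : NVar R N, (moralGraph (nEdge E R N)).Adj u v →
      nproj u = nproj v ∨ (moralGraph E).Adj (nproj u) (nproj v) := by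
  intro u v huv
  obtain ⟨hne, h⟩ := huv
  by_cases he : nproj u = nproj v
  · exact Or.inl he
  refine Or.inr ⟨he, ?_⟩
  have key : ∀ a b : NVar R N, nEdge E R N a b → E (nproj a) (nproj b) := by
    rintro (p | p) (q | q) hab <;> simp only [nEdge] at hab <;> simp only [nproj] <;>
      first
        | exact hab.elim
        | exact hab
        | exact hab.1
  rcases h with h | h | ⟨c, h1, h2⟩
  · exact Or.inl (key _ _ h)
  · exact Or.inr (Or.inl (key _ _ h))
  · exact Or.inr (Or.inr ⟨nproj c, key _ _ h1, key _ _ h2⟩)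

lemma main_rel {V : Type*} (E : V → V → Prop) (R : Set V) (N : ℕ) :
    ∀ (l : List V) (H : SimpleGraph (NVar R N)) (G : SimpleGraph V),
      (∀ u v, H.Adj u v → nproj u = nproj v ∨ G.Adj (nproj u) (nproj v)) →
      ∀ u v, (l.foldl (elimNBlock R N) H).Adj u v →
        nproj u = nproj v ∨ (elimList G l).Adj (nproj u) (nproj v)
  | [], H, G, h, u, v => h u v
  | z :: l, H, G, h, u, v => by
      intro huv
      exact main_rel E R N l (elimNBlock R N H z) (eliminate G z)
        (elimNBlock_rel z h) u v huv

/-- the neighborhoods in the `N`-world graph sequence are contained in the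
union of the `N` copies of the corresponding base neighborhoods. -/
theorem nworld_graph_sequence_neighborhoods {V : Type*} [Fintype V]
    (E : V → V → Prop) (hE : IsAcyclicRel E)
    (R : Set V) (hR : ∀ x ∈ R, isRoot E x) (N : ℕ) (hN : 1 ≤ N)
    (π : List V) (hπ : IsElimOrder π) (i : ℕ) (hi : i < π.length)
    (X : V) (hX : X ∉ π.take i) (j : Fin N) :
    closedNbhd (nGraphAt E R N π i) (ndup R N X j) ⊆
      ⋃ k : Fin N, (fun y => ndup R N y k) '' closedNbhd (graphAt (moralGraph E) π i) X := by
  intro v hv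
  rcases hv with rfl | hv
  · refine Set.mem_iUnion.mpr ⟨j, X, Set.mem_insert _ _, rfl⟩
  · have hadj : (nGraphAt E R N π i).Adj (ndup R N X j) v := hv
    have := main_rel E R N (π.take i) (moralGraph (nEdge E R N)) (moralGraph E)
      (moral_rel E R N) _ _ hadj
    rw [nproj_ndup] at this
    obtain ⟨k, hk⟩ := exists_ndup hN v
    refine Set.mem_iUnion.mpr ⟨k, nproj v, ?_, hk⟩
    rcases this with h | h
    · rw [← h]; exact Set.mem_insert _ _
    · exact Set.mem_insert_of_mem _ h

end Counterfactual
end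

section
/- There exist a base network G and a jointree for G of width 2 such that the twin jointree for the twin network G^t produced by Algorithm 1 from this jointree has width 5 = 2·2 + 1; hence the bound on the width of twin jointrees produced by Algorithm 1 is tight. -/
namespace Counterfactual

attribute [local instance] Classical.propDecidable

/-! ### Auxiliary: a kernel-friendly decision procedure for reachability -/

section BFS

variable {W : Type v} [Fintype W] [DecidableEq W]

def reachIter (G : SimpleGraph W) [DecidableRel G.Adj] (i : W) : ℕ → Finset W
  | 0 => {i}
  | n+1 => reachIter G i n ∪ Finset.univ.filter
      (fun b => ∃ a ∈ reachIter G i n, G.Adj a b)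

lemma reachIter_le (G : SimpleGraph W) [DecidableRel G.Adj] (i : W) {m n : ℕ} (h : m ≤ n) :
    reachIter G i m ⊆ reachIter G i n := by
  induction n with
  | zero => rw [Nat.le_zero.mp h]
  | succ n ih =>
    rcases Nat.lt_or_ge m (n+1) with h' | h'
    · refine (ih (Nat.lt_succ_iff.mp h')).trans ?_
      rw [show reachIter G i (n+1) = reachIter G i n ∪ Finset.univ.filter
        (fun b => ∃ a ∈ reachIter G i n, G.Adj a b) from rfl]
      exact Finset.subset_union_left
    · rw [le_antisymm h h']

lemma reachIter_sound (G : SimpleGraph W) [DecidableRel G.Adj] (i : W) :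
    ∀ n, ∀ l ∈ reachIter G i n, G.Reachable i l := by
  intro n
  induction n with
  | zero =>
    intro l hl
    rw [show reachIter G i 0 = {i} from rfl, Finset.mem_singleton] at hl
    subst hl; rfl
  | succ n ih =>
    intro l hl
    rw [show reachIter G i (n+1) = reachIter G i n ∪ Finset.univ.filter
        (fun b => ∃ a ∈ reachIter G i n, G.Adj a b) from rfl, Finset.mem_union,
        Finset.mem_filter] at hl
    rcases hl with hl | ⟨-, a, ha, hab⟩
    · exact ih l hl
    · exact (ih a ha).trans hab.reachable

lemma reachIter_step (G : SimpleGraph W) [DecidableRel G.Adj] (i : W) (n : ℕ) {a b : W}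
    (ha : a ∈ reachIter G i n) (hab : G.Adj a b) : b ∈ reachIter G i (n+1) := by
  rw [show reachIter G i (n+1) = reachIter G i n ∪ Finset.univ.filter
      (fun c => ∃ a ∈ reachIter G i n, G.Adj a c) from rfl, Finset.mem_union, Finset.mem_filter]
  exact Or.inr ⟨Finset.mem_univ _, a, ha, hab⟩

lemma reachIter_walk (G : SimpleGraph W) [DecidableRel G.Adj] (i : W) {u v : W}
    (p : G.Walk u v) : ∀ n, u ∈ reachIter G i n → v ∈ reachIter G i (n + p.length) := by
  induction p with
  | nil => intro n h; simpa using h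
  | @cons u w v h q ih =>
    intro n hu
    have hw : w ∈ reachIter G i (n+1) := reachIter_step G i n hu h
    have hv := ih (n+1) hw
    have : n + (SimpleGraph.Walk.cons h q).length = n + 1 + q.length := by
      rw [SimpleGraph.Walk.length_cons]; omega
    rw [this]
    exact hv

lemma reachable_iff_reachIter (G : SimpleGraph W) [DecidableRel G.Adj] (i l : W) :
    G.Reachable i l ↔ l ∈ reachIter G i (Fintype.card W) := by
  constructor
  · intro h
    obtain ⟨w⟩ := h
    have hlt : w.toPath.1.length < Fintype.card W := w.toPath.2.length_lt
    have h0 : i ∈ reachIter G i 0 := Finset.mem_singleton_self i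
    have := reachIter_walk G i w.toPath.1 0 h0
    exact reachIter_le G i (by omega) this
  · exact reachIter_sound G i _ l

instance (priority := 2000) reachDec (G : SimpleGraph W) [DecidableRel G.Adj] :
    DecidableRel G.Reachable :=
  fun i l => decidable_of_iff _ (reachable_iff_reachIter G i l).symm

end BFS

/-! ### Generic decidability instances -/

instance (priority := 2000) memSingletonSetDec {α : Type*} [DecidableEq α] (a b : α) :
    Decidable (a ∈ ({b} : Set α)) := inferInstanceAs (Decidable (a = b))

instance (priority := 2000) memInsertSetDec {α : Type*} [DecidableEq α] (a b : α) (s : Set α)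
    [Decidable (a ∈ s)] : Decidable (a ∈ insert b s) :=
  inferInstanceAs (Decidable (a = b ∨ a ∈ s))

instance (priority := 2000) memCoeFinsetDec {α : Type*} [DecidableEq α] (a : α) (f : Finset α) :
    Decidable (a ∈ (↑f : Set α)) := inferInstanceAs (Decidable (a ∈ f))

instance (priority := 2000) deleteEdgesAdjDec {α : Type u} [DecidableEq α] (G : SimpleGraph α)
    [DecidableRel G.Adj] (s : Set (Sym2 α)) [DecidablePred (· ∈ s)] :
    DecidableRel (G.deleteEdges s).Adj :=
  fun a b => decidable_of_iff _ (SimpleGraph.deleteEdges_adj (s := s) (v := a) (w := b)).symm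

instance (priority := 2000) sdiffAdjDec {α : Type u} (G H : SimpleGraph α)
    [DecidableRel G.Adj] [DecidableRel H.Adj] : DecidableRel (G \ H).Adj :=
  fun a b => decidable_of_iff _ (SimpleGraph.sdiff_adj G H a b).symm

instance (priority := 2000) fromEdgeSetAdjDec {α : Type u} [DecidableEq α]
    (s : Set (Sym2 α)) [DecidablePred (· ∈ s)] :
    DecidableRel (SimpleGraph.fromEdgeSet s).Adj :=
  fun a b => decidable_of_iff (s(a, b) ∈ s ∧ a ≠ b) (SimpleGraph.fromEdgeSet_adj s).symm

instance (priority := 2000) famOfDec {α : Type u} [DecidableEq α] (E : α → α → Prop)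
    [DecidableRel E] (x X : α) : Decidable (x ∈ famOf E X) :=
  inferInstanceAs (Decidable (x = X ∨ E x X))

/-! ### The base network: variables 0,1 are roots; 1→2, 2→3, 3→4, 2→4 -/

def bE : Fin 5 → Fin 5 → Prop := fun p x =>
  (p = 1 ∧ x = 2) ∨ (p = 2 ∧ x = 3) ∨ (p = 3 ∧ x = 4) ∨ (p = 2 ∧ x = 4)

instance : DecidableRel bE := fun p x =>
  inferInstanceAs (Decidable ((p = 1 ∧ x = 2) ∨ (p = 2 ∧ x = 3) ∨ (p = 3 ∧ x = 4) ∨ (p = 2 ∧ x = 4)))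

instance : DecidablePred (isRoot bE) := fun x =>
  inferInstanceAs (Decidable (∀ p, ¬ bE p x))

lemma bE_lt : ∀ a b : Fin 5, bE a b → a < b := by decide

lemma bE_acyclic : IsAcyclicRel bE := by
  intro x hx
  have key : ∀ a b : Fin 5, Relation.TransGen bE a b → a < b := by
    intro a b h
    induction h with
    | single h => exact bE_lt _ _ h
    | tail _ h ih => exact lt_trans ih (bE_lt _ _ h)
  exact absurd (key x x hx) (lt_irrefl x)

/-! ### The base jointree: tree on `Fin 8` -/

def tA : Fin 8 → Fin 8 → Prop := fun a b =>
  (a, b) ∈ [((0 : Fin 8), (1 : Fin 8)), (1, 2), (1, 6), (1, 7), (2, 3), (2, 4), (2, 5)] ∨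
  (b, a) ∈ [((0 : Fin 8), (1 : Fin 8)), (1, 2), (1, 6), (1, 7), (2, 3), (2, 4), (2, 5)]

instance : DecidableRel tA := fun a b => by unfold tA; infer_instance

def T0 : SimpleGraph (Fin 8) where
  Adj := tA
  symm := by constructor; unfold tA; decide
  loopless := by constructor; unfold tA; decide

instance : DecidableRel T0.Adj := fun a b => inferInstanceAs (Decidable (tA a b))

instance (j : Fin 8) : Decidable (IsLeaf T0 j) :=
  inferInstanceAs (Decidable (∃ k, T0.Adj j k ∧ ∀ y, T0.Adj j y → y = k))

lemma T0_tree : T0.IsTree := by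
  constructor
  · rw [SimpleGraph.connected_iff]
    exact ⟨by decide, ⟨0⟩⟩
  · rw [SimpleGraph.isAcyclic_iff_forall_adj_isBridge]
    intro v w h
    rw [SimpleGraph.isBridge_iff]
    revert h; revert v w
    show ∀ v w : Fin 8, T0.Adj v w →
      ¬(T0.deleteEdges {s(v, w)}).Reachable v w
    decide

def H0 : Fin 5 → Set (Fin 8) := fun X =>
  {j | (X = 0 ∧ j = 0) ∨ (X = 1 ∧ j = 5) ∨ (X = 2 ∧ j = 3) ∨ (X = 3 ∧ j = 4) ∨
    (X = 4 ∧ (j = 6 ∨ j = 7))}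

instance (X : Fin 5) (j : Fin 8) : Decidable (j ∈ H0 X) :=
  inferInstanceAs (Decidable ((X = 0 ∧ j = 0) ∨ (X = 1 ∧ j = 5) ∨ (X = 2 ∧ j = 3) ∨
    (X = 3 ∧ j = 4) ∨ (X = 4 ∧ (j = 6 ∨ j = 7))))

def jt0 : Jointree bE (Fin 8) where
  T := T0
  isTree := T0_tree
  H := H0
  hosts_nonempty := by
    show ∀ X : Fin 5, ∃ j, j ∈ H0 X
    decide
  hosts_leaf := by
    show ∀ (X : Fin 5) (j : Fin 8), j ∈ H0 X → IsLeaf T0 j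
    decide
  leaf_host := by
    show ∀ j : Fin 8, IsLeaf T0 j → ∃ X : Fin 5, j ∈ H0 X ∧ ∀ y : Fin 5, j ∈ H0 y → y = X
    decide

instance : DecidableRel jt0.T.Adj := fun a b => inferInstanceAs (Decidable (tA a b))

instance (j : Fin 8) : Decidable (IsLeaf jt0.T j) :=
  inferInstanceAs (Decidable (IsLeaf T0 j))

instance (X : Fin 5) (j : Fin 8) : Decidable (j ∈ jt0.H X) :=
  inferInstanceAs (Decidable (j ∈ H0 X))

instance (i j : Fin 8) (x : Fin 5) : Decidable (x ∈ sideVars jt0 i j) :=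
  inferInstanceAs (Decidable (∃ (Y : Fin 5) (l : Fin 8), l ∈ jt0.H Y ∧ x ∈ famOf bE Y ∧
    (jt0.T.deleteEdges {s(i, j)}).Reachable i l))

instance (i j : Fin 8) (x : Fin 5) : Decidable (x ∈ sepOf jt0 i j) :=
  inferInstanceAs (Decidable (x ∈ sideVars jt0 i j ∧ x ∈ sideVars jt0 j i))

/-! ### Base clusters and width -/

section BaseClusters

set_option maxHeartbeats 1000000

lemma cB0 : clusterJT jt0 0 = ↑({0} : Finset (Fin 5)) := by
  unfold clusterJT
  rw [if_pos (by decide : IsLeaf jt0.T 0)]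
  apply Set.ext; intro x
  simp only [Set.mem_iUnion, Set.mem_setOf_eq, exists_prop]
  revert x; decide

lemma cB1 : clusterJT jt0 1 = ↑({2, 3, 4} : Finset (Fin 5)) := by
  unfold clusterJT
  rw [if_neg (by decide : ¬ IsLeaf jt0.T 1)]
  apply Set.ext; intro x
  simp only [Set.mem_iUnion, Set.mem_setOf_eq, exists_prop]
  revert x; decide

lemma cB2 : clusterJT jt0 2 = ↑({1, 2, 3} : Finset (Fin 5)) := by
  unfold clusterJT
  rw [if_neg (by decide : ¬ IsLeaf jt0.T 2)]
  apply Set.ext; intro x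
  simp only [Set.mem_iUnion, Set.mem_setOf_eq, exists_prop]
  revert x; decide

lemma cB3 : clusterJT jt0 3 = ↑({1, 2} : Finset (Fin 5)) := by
  unfold clusterJT
  rw [if_pos (by decide : IsLeaf jt0.T 3)]
  apply Set.ext; intro x
  simp only [Set.mem_iUnion, Set.mem_setOf_eq, exists_prop]
  revert x; decide

lemma cB4 : clusterJT jt0 4 = ↑({2, 3} : Finset (Fin 5)) := by
  unfold clusterJT
  rw [if_pos (by decide : IsLeaf jt0.T 4)]
  apply Set.ext; intro x
  simp only [Set.mem_iUnion, Set.mem_setOf_eq, exists_prop]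
  revert x; decide

lemma cB5 : clusterJT jt0 5 = ↑({1} : Finset (Fin 5)) := by
  unfold clusterJT
  rw [if_pos (by decide : IsLeaf jt0.T 5)]
  apply Set.ext; intro x
  simp only [Set.mem_iUnion, Set.mem_setOf_eq, exists_prop]
  revert x; decide

lemma cB6 : clusterJT jt0 6 = ↑({2, 3, 4} : Finset (Fin 5)) := by
  unfold clusterJT
  rw [if_pos (by decide : IsLeaf jt0.T 6)]
  apply Set.ext; intro x
  simp only [Set.mem_iUnion, Set.mem_setOf_eq, exists_prop]
  revert x; decide

lemma cB7 : clusterJT jt0 7 = ↑({2, 3, 4} : Finset (Fin 5)) := by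
  unfold clusterJT
  rw [if_pos (by decide : IsLeaf jt0.T 7)]
  apply Set.ext; intro x
  simp only [Set.mem_iUnion, Set.mem_setOf_eq, exists_prop]
  revert x; decide

def clB : Fin 8 → Finset (Fin 5) := fun i =>
  if i = 0 then {0} else if i = 1 then {2, 3, 4} else if i = 2 then {1, 2, 3}
  else if i = 3 then {1, 2} else if i = 4 then {2, 3} else if i = 5 then {1} else {2, 3, 4}

lemma clusterB : ∀ i : Fin 8, clusterJT jt0 i = ↑(clB i) := by
  intro i
  fin_cases i
  exacts [cB0, cB1, cB2, cB3, cB4, cB5, cB6, cB7]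

lemma width_base : widthJT jt0 = 2 := by
  have hsup : (⨆ i : Fin 8, (clusterJT jt0 i).ncard) = 3 := by
    apply le_antisymm
    · apply ciSup_le
      intro i
      rw [clusterB i, Set.ncard_coe_finset]
      revert i; decide
    · have h := le_ciSup (f := fun i : Fin 8 => (clusterJT jt0 i).ncard)
        (Set.Finite.bddAbove (Set.finite_range _)) (6 : Fin 8)
      rw [clusterB 6, Set.ncard_coe_finset] at h
      exact le_trans (by decide) h
  unfold widthJT
  rw [hsup]

end BaseClusters

/-! ### Which nodes are duplicated by Algorithm 1 (rooted at 0) -/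

lemma below_self {J : Type v} (T : SimpleGraph J) (r l : J) : Below T r l l :=
  fun p _ => p.end_mem_support

lemma below_start {J : Type v} (T : SimpleGraph J) (r l : J) : Below T r r l :=
  fun p _ => p.start_mem_support

lemma forced_first {J : Type v} {T : SimpleGraph J} {r b l : J} (hrl : r ≠ l)
    (hb : ∀ k, T.Adj r k → k = b) : Below T r b l := by
  intro p _
  cases p with
  | nil => exact absurd rfl hrl
  | cons h q =>
    rw [SimpleGraph.Walk.support_cons]
    have := hb _ h
    subst this
    exact List.mem_cons_of_mem _ q.start_mem_support

lemma forced_last {J : Type v} {T : SimpleGraph J} {r b l : J} (hrl : r ≠ l)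
    (hb : ∀ k, T.Adj l k → k = b) : Below T r b l := by
  intro p hp
  have h := forced_first (T := T) (r := l) (b := b) (l := r) (fun h => hrl h.symm) hb
    p.reverse hp.reverse
  rw [SimpleGraph.Walk.support_reverse, List.mem_reverse] at h
  exact h

lemma a01 : T0.Adj 0 1 := by decide
lemma a12 : T0.Adj 1 2 := by decide
lemma a16 : T0.Adj 1 6 := by decide
lemma a17 : T0.Adj 1 7 := by decide
lemma a23 : T0.Adj 2 3 := by decide
lemma a24 : T0.Adj 2 4 := by decide
lemma a25 : T0.Adj 2 5 := by decide

def w3 : T0.Walk 0 3 := .cons a01 (.cons a12 (.cons a23 .nil))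
def w4 : T0.Walk 0 4 := .cons a01 (.cons a12 (.cons a24 .nil))
def w5 : T0.Walk 0 5 := .cons a01 (.cons a12 (.cons a25 .nil))
def w6 : T0.Walk 0 6 := .cons a01 (.cons a16 .nil)
def w7 : T0.Walk 0 7 := .cons a01 (.cons a17 .nil)

lemma ip3 : w3.IsPath := (SimpleGraph.Walk.isPath_def _).mpr (by decide)
lemma ip4 : w4.IsPath := (SimpleGraph.Walk.isPath_def _).mpr (by decide)
lemma ip5 : w5.IsPath := (SimpleGraph.Walk.isPath_def _).mpr (by decide)
lemma ip6 : w6.IsPath := (SimpleGraph.Walk.isPath_def _).mpr (by decide)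
lemma ip7 : w7.IsPath := (SimpleGraph.Walk.isPath_def _).mpr (by decide)

lemma leaf_cases : ∀ l : Fin 8, IsLeaf T0 l →
    l = 0 ∨ l = 3 ∨ l = 4 ∨ l = 5 ∨ l = 6 ∨ l = 7 := by decide

lemma host_internal (u : Fin 8) (hu : u = 3 ∨ u = 4 ∨ u = 6 ∨ u = 7) :
    ∀ X : Fin 5, u ∈ jt0.H X → ¬ isRoot bE X := by
  revert hu; revert u
  show ∀ u : Fin 8, (u = 3 ∨ u = 4 ∨ u = 6 ∨ u = 7) → ∀ X : Fin 5, u ∈ H0 X → ¬ isRoot bE X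
  decide

lemma dup_of (u : Fin 8) (hu : u = 3 ∨ u = 4 ∨ u = 6 ∨ u = 7) : Duplicated jt0 0 u := by
  intro l hl hb X hX
  rcases leaf_cases l hl with rfl | rfl | rfl | rfl | rfl | rfl
  · have h0 := hb SimpleGraph.Walk.nil (SimpleGraph.Walk.IsPath.nil)
    rw [SimpleGraph.Walk.support_nil] at h0
    rcases hu with rfl | rfl | rfl | rfl <;> exact absurd h0 (by decide)
  · rcases hu with rfl | rfl | rfl | rfl
    · exact host_internal 3 (by decide) X hX
    all_goals exact absurd (hb w3 ip3) (by decide)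
  · rcases hu with rfl | rfl | rfl | rfl
    · exact absurd (hb w4 ip4) (by decide)
    · exact host_internal 4 (by decide) X hX
    all_goals exact absurd (hb w4 ip4) (by decide)
  · rcases hu with rfl | rfl | rfl | rfl <;> exact absurd (hb w5 ip5) (by decide)
  · rcases hu with rfl | rfl | rfl | rfl
    · exact absurd (hb w6 ip6) (by decide)
    · exact absurd (hb w6 ip6) (by decide)
    · exact host_internal 6 (by decide) X hX
    · exact absurd (hb w6 ip6) (by decide)
  · rcases hu with rfl | rfl | rfl | rfl
    · exact absurd (hb w7 ip7) (by decide)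
    · exact absurd (hb w7 ip7) (by decide)
    · exact absurd (hb w7 ip7) (by decide)
    · exact host_internal 7 (by decide) X hX

lemma dup3 : Duplicated jt0 0 3 := dup_of 3 (by decide)
lemma dup4 : Duplicated jt0 0 4 := dup_of 4 (by decide)
lemma dup6 : Duplicated jt0 0 6 := dup_of 6 (by decide)
lemma dup7 : Duplicated jt0 0 7 := dup_of 7 (by decide)

lemma leaf5 : IsLeaf jt0.T 5 := by decide

lemma ndup0 : ¬ Duplicated jt0 0 0 :=
  fun h => h 0 (by decide) (below_start jt0.T 0 0) 0 (by decide) (by decide)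

lemma ndup1 : ¬ Duplicated jt0 0 1 :=
  fun h => h 5 leaf5
    (forced_first (by decide) (by decide : ∀ k, jt0.T.Adj 0 k → k = 1)) 1 (by decide) (by decide)

lemma ndup2 : ¬ Duplicated jt0 0 2 :=
  fun h => h 5 leaf5
    (forced_last (by decide) (by decide : ∀ k, jt0.T.Adj 5 k → k = 2)) 1 (by decide) (by decide)

lemma ndup5 : ¬ Duplicated jt0 0 5 :=
  fun h => h 5 leaf5 (below_self jt0.T 0 5) 1 (by decide) (by decide)

lemma dup_iff (u : Fin 8) : Duplicated jt0 0 u ↔ (u = 3 ∨ u = 4 ∨ u = 6 ∨ u = 7) := by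
  constructor
  · intro h
    by_contra hc
    have key : ∀ v : Fin 8, ¬(v = 3 ∨ v = 4 ∨ v = 6 ∨ v = 7) →
        (v = 0 ∨ v = 1 ∨ v = 2 ∨ v = 5) := by decide
    rcases key u hc with rfl | rfl | rfl | rfl
    · exact ndup0 h
    · exact ndup1 h
    · exact ndup2 h
    · exact ndup5 h
  · exact dup_of u

instance : DecidablePred (Duplicated jt0 0) := fun u =>
  decidable_of_iff _ (dup_iff u).symm

/-! ### The twin jointree -/

set_option synthInstance.maxSize 2000
set_option synthInstance.maxHeartbeats 1000000
set_option maxHeartbeats 2000000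

instance : DecidableRel (twinEdge bE) := fun a b =>
  match a, b with
  | Sum.inl p, Sum.inl x => inferInstanceAs (Decidable (bE p x))
  | Sum.inl p, Sum.inr x => inferInstanceAs (Decidable (isRoot bE p ∧ bE p x.1))
  | Sum.inr p, Sum.inr x => inferInstanceAs (Decidable (bE p.1 x.1))
  | Sum.inr _, Sum.inl _ => inferInstanceAs (Decidable False)

instance : DecidableRel (twinT jt0 0).Adj := fun a b =>
  match a, b with
  | Sum.inl i, Sum.inl j => inferInstanceAs (Decidable (tA i j))
  | Sum.inl i, Sum.inr v => inferInstanceAs (Decidable (tA i v.1 ∧ ¬ Duplicated jt0 0 i))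
  | Sum.inr u, Sum.inl j => inferInstanceAs (Decidable (tA u.1 j ∧ ¬ Duplicated jt0 0 j))
  | Sum.inr u, Sum.inr v => inferInstanceAs (Decidable (tA u.1 v.1))

instance (j : TwinJ jt0 0) : Decidable (IsLeaf (twinT jt0 0) j) :=
  inferInstanceAs (Decidable (∃ k, (twinT jt0 0).Adj j k ∧ ∀ y, (twinT jt0 0).Adj j y → y = k))

instance (X : TwinVar bE) (b : TwinJ jt0 0) : Decidable (b ∈ twinH jt0 0 X) :=
  match X with
  | Sum.inl x => inferInstanceAs (Decidable (∃ l, l ∈ H0 x ∧ Sum.inl l = b))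
  | Sum.inr x => inferInstanceAs
      (Decidable (∃ (l : Fin 8) (hl : Duplicated jt0 0 l), l ∈ H0 x.1 ∧ b = Sum.inr ⟨l, hl⟩))


set_option synthInstance.maxSize 2000 in
set_option synthInstance.maxHeartbeats 1000000 in
set_option maxHeartbeats 2000000 in
lemma twinT_tree : (twinT jt0 0).IsTree := by
  constructor
  · rw [SimpleGraph.connected_iff]
    exact ⟨by decide, ⟨Sum.inl 0⟩⟩
  · rw [SimpleGraph.isAcyclic_iff_forall_adj_isBridge]
    intro v w h
    rw [SimpleGraph.isBridge_iff]
    revert h; revert v w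
    show ∀ v w : TwinJ jt0 0, (twinT jt0 0).Adj v w →
      ¬((twinT jt0 0).deleteEdges {s(v, w)}).Reachable v w
    decide

noncomputable def jt1 : Jointree (twinEdge bE) (TwinJ jt0 0) where
  T := twinT jt0 0
  isTree := twinT_tree
  H := twinH jt0 0
  hosts_nonempty := by
    show ∀ X : TwinVar bE, ∃ j : TwinJ jt0 0, j ∈ twinH jt0 0 X
    decide
  hosts_leaf := by
    show ∀ (X : TwinVar bE) (j : TwinJ jt0 0), j ∈ twinH jt0 0 X → IsLeaf (twinT jt0 0) j
    decide
  leaf_host := by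
    show ∀ j : TwinJ jt0 0, IsLeaf (twinT jt0 0) j →
      ∃ X : TwinVar bE, j ∈ twinH jt0 0 X ∧ ∀ y : TwinVar bE, j ∈ twinH jt0 0 y → y = X
    decide

instance : DecidableRel jt1.T.Adj := fun a b =>
  inferInstanceAs (Decidable ((twinT jt0 0).Adj a b))

instance (j : TwinJ jt0 0) : Decidable (IsLeaf jt1.T j) :=
  inferInstanceAs (Decidable (IsLeaf (twinT jt0 0) j))

instance (X : TwinVar bE) (b : TwinJ jt0 0) : Decidable (b ∈ jt1.H X) :=
  inferInstanceAs (Decidable (b ∈ twinH jt0 0 X))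

noncomputable instance (i j : TwinJ jt0 0) (x : TwinVar bE) : Decidable (x ∈ sideVars jt1 i j) :=
  inferInstanceAs (Decidable (∃ (Y : TwinVar bE) (l : TwinJ jt0 0),
    l ∈ jt1.H Y ∧ x ∈ famOf (twinEdge bE) Y ∧ (jt1.T.deleteEdges {s(i, j)}).Reachable i l))

noncomputable instance (i j : TwinJ jt0 0) (x : TwinVar bE) : Decidable (x ∈ sepOf jt1 i j) :=
  inferInstanceAs (Decidable (x ∈ sideVars jt1 i j ∧ x ∈ sideVars jt1 j i))

/-! ### Twin clusters and width -/

section TwinClusters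

set_option maxHeartbeats 4000000
set_option synthInstance.maxSize 2000
set_option synthInstance.maxHeartbeats 1000000

def v0 : TwinVar bE := Sum.inl 0
def v1 : TwinVar bE := Sum.inl 1
def v2 : TwinVar bE := Sum.inl 2
def v3 : TwinVar bE := Sum.inl 3
def v4 : TwinVar bE := Sum.inl 4
def d2 : TwinVar bE := Sum.inr ⟨2, by decide⟩
def d3 : TwinVar bE := Sum.inr ⟨3, by decide⟩
def d4 : TwinVar bE := Sum.inr ⟨4, by decide⟩

lemma cT0 : clusterJT jt1 (Sum.inl 0) = ↑({v0} : Finset (TwinVar bE)) := by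
  unfold clusterJT
  rw [if_pos (by decide : IsLeaf jt1.T (Sum.inl 0))]
  apply Set.ext; intro x
  simp only [Set.mem_iUnion, Set.mem_setOf_eq, exists_prop]
  revert x; decide

lemma cT1 : clusterJT jt1 (Sum.inl 1) = ↑({v2, v3, v4, d2, d3, d4} : Finset (TwinVar bE)) := by
  unfold clusterJT
  rw [if_neg (by decide : ¬ IsLeaf jt1.T (Sum.inl 1))]
  apply Set.ext; intro x
  simp only [Set.mem_iUnion, Set.mem_setOf_eq, exists_prop]
  revert x; decide

lemma cT2 : clusterJT jt1 (Sum.inl 2) = ↑({v1, v2, v3, d2, d3} : Finset (TwinVar bE)) := by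
  unfold clusterJT
  rw [if_neg (by decide : ¬ IsLeaf jt1.T (Sum.inl 2))]
  apply Set.ext; intro x
  simp only [Set.mem_iUnion, Set.mem_setOf_eq, exists_prop]
  revert x; decide

lemma cT3 : clusterJT jt1 (Sum.inl 3) = ↑({v1, v2} : Finset (TwinVar bE)) := by
  unfold clusterJT
  rw [if_pos (by decide : IsLeaf jt1.T (Sum.inl 3))]
  apply Set.ext; intro x
  simp only [Set.mem_iUnion, Set.mem_setOf_eq, exists_prop]
  revert x; decide

lemma cT4 : clusterJT jt1 (Sum.inl 4) = ↑({v2, v3} : Finset (TwinVar bE)) := by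
  unfold clusterJT
  rw [if_pos (by decide : IsLeaf jt1.T (Sum.inl 4))]
  apply Set.ext; intro x
  simp only [Set.mem_iUnion, Set.mem_setOf_eq, exists_prop]
  revert x; decide

lemma cT5 : clusterJT jt1 (Sum.inl 5) = ↑({v1} : Finset (TwinVar bE)) := by
  unfold clusterJT
  rw [if_pos (by decide : IsLeaf jt1.T (Sum.inl 5))]
  apply Set.ext; intro x
  simp only [Set.mem_iUnion, Set.mem_setOf_eq, exists_prop]
  revert x; decide

lemma cT6 : clusterJT jt1 (Sum.inl 6) = ↑({v2, v3, v4} : Finset (TwinVar bE)) := by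
  unfold clusterJT
  rw [if_pos (by decide : IsLeaf jt1.T (Sum.inl 6))]
  apply Set.ext; intro x
  simp only [Set.mem_iUnion, Set.mem_setOf_eq, exists_prop]
  revert x; decide

lemma cT7 : clusterJT jt1 (Sum.inl 7) = ↑({v2, v3, v4} : Finset (TwinVar bE)) := by
  unfold clusterJT
  rw [if_pos (by decide : IsLeaf jt1.T (Sum.inl 7))]
  apply Set.ext; intro x
  simp only [Set.mem_iUnion, Set.mem_setOf_eq, exists_prop]
  revert x; decide

lemma cTn3 (h : Duplicated jt0 0 3) :
    clusterJT jt1 (Sum.inr ⟨3, h⟩) = ↑({v1, d2} : Finset (TwinVar bE)) := by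
  have e : (Sum.inr ⟨3, h⟩ : TwinJ jt0 0) = Sum.inr ⟨3, dup3⟩ := rfl
  rw [e]
  unfold clusterJT
  rw [if_pos (by decide : IsLeaf jt1.T (Sum.inr ⟨3, dup3⟩))]
  apply Set.ext; intro x
  simp only [Set.mem_iUnion, Set.mem_setOf_eq, exists_prop]
  revert x; decide

lemma cTn4 (h : Duplicated jt0 0 4) :
    clusterJT jt1 (Sum.inr ⟨4, h⟩) = ↑({d2, d3} : Finset (TwinVar bE)) := by
  have e : (Sum.inr ⟨4, h⟩ : TwinJ jt0 0) = Sum.inr ⟨4, dup4⟩ := rfl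
  rw [e]
  unfold clusterJT
  rw [if_pos (by decide : IsLeaf jt1.T (Sum.inr ⟨4, dup4⟩))]
  apply Set.ext; intro x
  simp only [Set.mem_iUnion, Set.mem_setOf_eq, exists_prop]
  revert x; decide

lemma cTn6 (h : Duplicated jt0 0 6) :
    clusterJT jt1 (Sum.inr ⟨6, h⟩) = ↑({d2, d3, d4} : Finset (TwinVar bE)) := by
  have e : (Sum.inr ⟨6, h⟩ : TwinJ jt0 0) = Sum.inr ⟨6, dup6⟩ := rfl
  rw [e]
  unfold clusterJT
  rw [if_pos (by decide : IsLeaf jt1.T (Sum.inr ⟨6, dup6⟩))]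
  apply Set.ext; intro x
  simp only [Set.mem_iUnion, Set.mem_setOf_eq, exists_prop]
  revert x; decide

lemma cTn7 (h : Duplicated jt0 0 7) :
    clusterJT jt1 (Sum.inr ⟨7, h⟩) = ↑({d2, d3, d4} : Finset (TwinVar bE)) := by
  have e : (Sum.inr ⟨7, h⟩ : TwinJ jt0 0) = Sum.inr ⟨7, dup7⟩ := rfl
  rw [e]
  unfold clusterJT
  rw [if_pos (by decide : IsLeaf jt1.T (Sum.inr ⟨7, dup7⟩))]
  apply Set.ext; intro x
  simp only [Set.mem_iUnion, Set.mem_setOf_eq, exists_prop]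
  revert x; decide

lemma clusterT_le : ∀ i : TwinJ jt0 0, (clusterJT jt1 i).ncard ≤ 6 := by
  intro i
  rcases i with j | ⟨u, hu⟩
  · fin_cases j
    · show (clusterJT jt1 (Sum.inl 0)).ncard ≤ 6
      rw [cT0, Set.ncard_coe_finset]; decide
    · show (clusterJT jt1 (Sum.inl 1)).ncard ≤ 6
      rw [cT1, Set.ncard_coe_finset]; decide
    · show (clusterJT jt1 (Sum.inl 2)).ncard ≤ 6
      rw [cT2, Set.ncard_coe_finset]; decide
    · show (clusterJT jt1 (Sum.inl 3)).ncard ≤ 6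
      rw [cT3, Set.ncard_coe_finset]; decide
    · show (clusterJT jt1 (Sum.inl 4)).ncard ≤ 6
      rw [cT4, Set.ncard_coe_finset]; decide
    · show (clusterJT jt1 (Sum.inl 5)).ncard ≤ 6
      rw [cT5, Set.ncard_coe_finset]; decide
    · show (clusterJT jt1 (Sum.inl 6)).ncard ≤ 6
      rw [cT6, Set.ncard_coe_finset]; decide
    · show (clusterJT jt1 (Sum.inl 7)).ncard ≤ 6
      rw [cT7, Set.ncard_coe_finset]; decide
  · rcases (dup_iff u).mp hu with rfl | rfl | rfl | rfl
    · rw [cTn3 hu, Set.ncard_coe_finset]; decide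
    · rw [cTn4 hu, Set.ncard_coe_finset]; decide
    · rw [cTn6 hu, Set.ncard_coe_finset]; decide
    · rw [cTn7 hu, Set.ncard_coe_finset]; decide

lemma width_twin : widthJT jt1 = 5 := by
  have hsup : (⨆ i : TwinJ jt0 0, (clusterJT jt1 i).ncard) = 6 := by
    apply le_antisymm
    · exact ciSup_le clusterT_le
    · have h := le_ciSup (f := fun i : TwinJ jt0 0 => (clusterJT jt1 i).ncard)
        (Set.Finite.bddAbove (Set.finite_range _)) (Sum.inl 1)
      rw [cT1, Set.ncard_coe_finset] at h
      exact le_trans (by decide) h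
  unfold widthJT
  rw [hsup]

end TwinClusters

lemma root_host : ∀ X : Fin 5, 0 ∈ jt0.H X → isRoot bE X := by decide


/-- the bound `2w + 1` on the width of twin jointrees produced by
Algorithm 1 is tight: some base network has a jointree of width `2` whose twin jointree
produced by Algorithm 1 has width `5`. -/
theorem twin_jointree_width_bound_tight :
    ∃ (V : Type) (_ : Fintype V) (E : V → V → Prop) (J : Type) (_ : Finite J)
      (jt : Jointree E J) (r : J),
      IsAcyclicRel E ∧ (∀ X : V, r ∈ jt.H X → isRoot E X) ∧ widthJT jt = 2 ∧
      ∃ jt' : Jointree (twinEdge E) (TwinJ jt r),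
        jt'.T = twinT jt r ∧ jt'.H = twinH jt r ∧ widthJT jt' = 5 := by
  exact ⟨Fin 5, inferInstance, bE, Fin 8, inferInstance, jt0, 0, bE_acyclic, root_host,
    width_base, jt1, rfl, rfl, width_twin⟩

end Counterfactual
end
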